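/- arXiv:1409.1991 — 4 statements merged into one kernel-verified Lean document; each statement's English description precedes it below -/
import Mathlib

section
/- Let $I \subseteq \mathbb{R}$ be an open interval and $f : I \to (0,\infty)$ a smooth function with $(\log f)''(t) \le 0$ for all $t \in I$. Let $u : \mathbb{R}^2 \to \mathbb{R}$ be a smooth doubly periodic function with $u(\mathbb{R}^2) \subseteq I$ and $|Du| < f(u)$ everywhere. If $H(u)^2 \le \dfrac{f'(u)^2}{f(u)^2}$ at every point of $\mathbb{R}^2$, then $u$ is constant. -/
set_option linter.unusedSectionVars false
set_option maxHeartbeats 1000000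

noncomputable section

/-- The Euclidean plane. -/
abbrev E2 : Type := EuclideanSpace ℝ (Fin 2)

/-- Euclidean divergence of a vector field on the plane: the trace of its derivative. -/
def divergence (V : E2 → E2) (p : E2) : ℝ :=
  LinearMap.trace ℝ E2 (fderiv ℝ V p).toLinearMap

/-- The mean curvature operator `H(u)` of the spacelike graph of `u` in the GRW spacetime
`I ×_f ℝ²`:
`H(u) = - div (Du / (2 f(u) √(f(u)² - |Du|²))) - (f'(u) / (2 √(f(u)² - |Du|²))) (2 + |Du|²/f(u)²)`. -/
def Hmean (f : ℝ → ℝ) (u : E2 → ℝ) (p : E2) : ℝ :=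
  - divergence
      (fun q => (2 * f (u q) * Real.sqrt ((f (u q)) ^ 2 - ‖gradient u q‖ ^ 2))⁻¹ • gradient u q) p
  - deriv f (u p) / (2 * Real.sqrt ((f (u p)) ^ 2 - ‖gradient u p‖ ^ 2)) *
      (2 + ‖gradient u p‖ ^ 2 / (f (u p)) ^ 2)

/-- A function on the plane is doubly periodic if it is invariant under translation by
every vector of `ℤ²`. -/
def DoublyPeriodic (u : E2 → ℝ) : Prop :=
  ∀ p : E2, ∀ k : Fin 2 → ℤ,
    u (p + (WithLp.equiv 2 (Fin 2 → ℝ)).symm (fun i => (k i : ℝ))) = u p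

end

noncomputable section AuxCB

open MeasureTheory Set

/-! ### Linear algebra helpers -/

def e2 (i : Fin 2) : E2 := EuclideanSpace.single i 1

lemma E2_ext {v w : E2} (h0 : v 0 = w 0) (h1 : v 1 = w 1) : v = w := by
  apply (WithLp.equiv 2 (Fin 2 → ℝ)).injective
  funext i
  fin_cases i <;> assumption

lemma e2_decomp (v : E2) : v = v 0 • e2 0 + v 1 • e2 1 := by
  apply E2_ext <;> simp [e2, EuclideanSpace.single_apply]

lemma divergence_apply (V : E2 → E2) (p : E2) :
    divergence V p = fderiv ℝ V p (e2 0) 0 + fderiv ℝ V p (e2 1) 1 := by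
  rw [divergence,
    LinearMap.trace_eq_matrix_trace ℝ (EuclideanSpace.basisFun (Fin 2) ℝ).toBasis]
  rw [Matrix.trace]
  simp [Matrix.diag, LinearMap.toMatrix_apply, Fin.sum_univ_two, e2]

lemma divergence_smul (c : E2 → ℝ) (V : E2 → E2) (p : E2)
    (hc : DifferentiableAt ℝ c p) (hV : DifferentiableAt ℝ V p) :
    divergence (fun q => c q • V q) p = fderiv ℝ c p (V p) + c p * divergence V p := by
  rw [divergence_apply, divergence_apply, fderiv_fun_smul hc hV]
  have hd : (fderiv ℝ c p) (V p)
      = V p 0 * (fderiv ℝ c p) (e2 0) + V p 1 * (fderiv ℝ c p) (e2 1) := by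
    conv_lhs => rw [e2_decomp (V p)]
    simp [smul_eq_mul]
  rw [hd]
  simp [ContinuousLinearMap.add_apply, ContinuousLinearMap.smul_apply,
    ContinuousLinearMap.smulRight_apply, PiLp.add_apply, PiLp.smul_apply, smul_eq_mul]
  ring

namespace CB

/-! ### The vector field `W` and the operator decomposition -/

def W (f : ℝ → ℝ) (u : E2 → ℝ) (q : E2) : E2 :=
  (2 * f (u q) * Real.sqrt ((f (u q)) ^ 2 - ‖gradient u q‖ ^ 2))⁻¹ • gradient u q

def S (f : ℝ → ℝ) (u : E2 → ℝ) (p : E2) : ℝ :=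
  deriv f (u p) / (2 * Real.sqrt ((f (u p)) ^ 2 - ‖gradient u p‖ ^ 2)) *
      (2 + ‖gradient u p‖ ^ 2 / (f (u p)) ^ 2)

lemma Hmean_eq (f : ℝ → ℝ) (u : E2 → ℝ) (p : E2) :
    Hmean f u p = - divergence (W f u) p - S f u p := rfl

/-! ### Smoothness -/

variable {I : Set ℝ} {f : ℝ → ℝ} {u : E2 → ℝ}

section smooth
variable (hI : IsOpen I) (hf : ContDiffOn ℝ (⊤ : ℕ∞) f I) (hfpos : ∀ t ∈ I, 0 < f t)
  (hu : ContDiff ℝ (⊤ : ℕ∞) u) (hrange : ∀ p, u p ∈ I) (hgrad : ∀ p, ‖gradient u p‖ < f (u p))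

include hI hf hfpos hu hrange hgrad

lemma wsq_pos (p : E2) : 0 < (f (u p)) ^ 2 - ‖gradient u p‖ ^ 2 := by
  have h1 := hgrad p
  have h2 := norm_nonneg (gradient u p)
  have h3 := hfpos _ (hrange p)
  nlinarith

lemma w_pos (p : E2) : 0 < Real.sqrt ((f (u p)) ^ 2 - ‖gradient u p‖ ^ 2) :=
  Real.sqrt_pos.2 (wsq_pos hI hf hfpos hu hrange hgrad p)

lemma w_le (p : E2) : Real.sqrt ((f (u p)) ^ 2 - ‖gradient u p‖ ^ 2) ≤ f (u p) := by
  have h3 := hfpos _ (hrange p)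
  calc Real.sqrt ((f (u p)) ^ 2 - ‖gradient u p‖ ^ 2) ≤ Real.sqrt ((f (u p)) ^ 2) := by
        apply Real.sqrt_le_sqrt; nlinarith [norm_nonneg (gradient u p)]
    _ = f (u p) := by rw [Real.sqrt_sq h3.le]

lemma contDiff_grad : ContDiff ℝ 2 (gradient u) := by
  have h1 : ContDiff ℝ 2 (fderiv ℝ u) := hu.fderiv_right (by exact WithTop.coe_le_coe.2 le_top)
  have h2 : gradient u = fun p => (InnerProductSpace.toDual ℝ E2).symm (fderiv ℝ u p) := rfl
  rw [h2]
  exact (InnerProductSpace.toDual ℝ E2).symm.contDiff.comp h1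

lemma contDiffAt_f (p : E2) : ContDiffAt ℝ 2 f (u p) :=
  (hf.of_le (by exact WithTop.coe_le_coe.2 le_top)).contDiffAt (hI.mem_nhds (hrange p))

lemma contDiffAt_fu (p : E2) : ContDiffAt ℝ 2 (fun q => f (u q)) p :=
  (contDiffAt_f hI hf hfpos hu hrange hgrad p).comp p (hu.of_le (by exact WithTop.coe_le_coe.2 le_top)).contDiffAt

lemma contDiffAt_wf (p : E2) :
    ContDiffAt ℝ 2 (fun q => Real.sqrt ((f (u q)) ^ 2 - ‖gradient u q‖ ^ 2)) p := by
  apply ContDiffAt.sqrt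
  · exact ((contDiffAt_fu hI hf hfpos hu hrange hgrad p).pow 2).sub
      (((contDiff_grad hI hf hfpos hu hrange hgrad).norm_sq ℝ).contDiffAt)
  · exact (wsq_pos hI hf hfpos hu hrange hgrad p).ne'

lemma contDiffAt_W (p : E2) : ContDiffAt ℝ 2 (W f u) p := by
  apply ContDiffAt.fun_smul _ (contDiff_grad hI hf hfpos hu hrange hgrad).contDiffAt
  apply ContDiffAt.inv
  · exact (contDiffAt_const.mul (contDiffAt_fu hI hf hfpos hu hrange hgrad p)).mul
      (contDiffAt_wf hI hf hfpos hu hrange hgrad p)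
  · have := hfpos _ (hrange p)
    have := w_pos hI hf hfpos hu hrange hgrad p
    positivity

lemma contDiffAt_FV (t0 : ℝ) (p : E2) :
    ContDiffAt ℝ 2 (fun q => (u q - t0) • W f u q) p :=
  (((hu.of_le (by exact WithTop.coe_le_coe.2 le_top)).contDiffAt).sub contDiffAt_const).smul
    (contDiffAt_W hI hf hfpos hu hrange hgrad p)

lemma continuous_fderiv_FV (t0 : ℝ) :
    Continuous (fderiv ℝ (fun q => (u q - t0) • W f u q)) := by
  rw [continuous_iff_continuousAt]
  intro p
  obtain ⟨s, hs, hcd⟩ := (contDiffAt_FV hI hf hfpos hu hrange hgrad t0 p).contDiffOn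
    (le_refl 2) (by simp)
  obtain ⟨t, hts, ht, hpt⟩ := mem_nhds_iff.1 hs
  exact ((hcd.mono hts).continuousOn_fderiv_of_isOpen ht (by norm_num)).continuousAt
    (ht.mem_nhds hpt)

lemma continuous_div_FV (t0 : ℝ) :
    Continuous (fun p => divergence (fun q => (u q - t0) • W f u q) p) := by
  have h : (fun p => divergence (fun q => (u q - t0) • W f u q) p)
      = fun p => (EuclideanSpace.proj (0 : Fin 2))
          ((fderiv ℝ (fun q => (u q - t0) • W f u q) p) (EuclideanSpace.single 0 1))
        + (EuclideanSpace.proj (1 : Fin 2))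
          ((fderiv ℝ (fun q => (u q - t0) • W f u q) p) (EuclideanSpace.single 1 1)) := by
    funext p
    rw [divergence]
    rw [LinearMap.trace_eq_matrix_trace ℝ (EuclideanSpace.basisFun (Fin 2) ℝ).toBasis]
    rw [Matrix.trace]
    simp [Matrix.diag, LinearMap.toMatrix_apply, Fin.sum_univ_two]
  rw [h]
  have hfd := continuous_fderiv_FV hI hf hfpos hu hrange hgrad t0
  exact ((EuclideanSpace.proj (0 : Fin 2)).continuous.comp
      (hfd.clm_apply continuous_const)).add
    ((EuclideanSpace.proj (1 : Fin 2)).continuous.comp (hfd.clm_apply continuous_const))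

end smooth

/-! ### Periodicity -/

def ivec (k : Fin 2 → ℤ) : E2 := (WithLp.equiv 2 (Fin 2 → ℝ)).symm (fun i => (k i : ℝ))

lemma ivec_apply (k : Fin 2 → ℤ) (i : Fin 2) : ivec k i = (k i : ℝ) := rfl

lemma fderiv_per (hu : ContDiff ℝ (⊤ : ℕ∞) u) (hper : DoublyPeriodic u) (p : E2) (k : Fin 2 → ℤ) :
    fderiv ℝ u (p + ivec k) = fderiv ℝ u p := by
  have h2 : HasFDerivAt (fun q : E2 => q + ivec k) (ContinuousLinearMap.id ℝ E2) p := by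
    simpa using (hasFDerivAt_id p).add_const (ivec k)
  have h1 : HasFDerivAt (fun q => u (q + ivec k)) (fderiv ℝ u (p + ivec k)) p := by
    have h := ((hu.differentiable (by simp) (p + ivec k)).hasFDerivAt.comp p h2)
    simp only [ContinuousLinearMap.comp_id] at h
    exact h
  have h3 : (fun q => u (q + ivec k)) = u := funext fun q => hper q k
  rw [h3] at h1
  rw [h1.fderiv]

lemma grad_per (hu : ContDiff ℝ (⊤ : ℕ∞) u) (hper : DoublyPeriodic u) (p : E2) (k : Fin 2 → ℤ) :
    gradient u (p + ivec k) = gradient u p := by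
  unfold gradient
  rw [fderiv_per hu hper p k]

lemma W_per (hu : ContDiff ℝ (⊤ : ℕ∞) u) (hper : DoublyPeriodic u) (f : ℝ → ℝ)
    (p : E2) (k : Fin 2 → ℤ) : W f u (p + ivec k) = W f u p := by
  unfold W
  rw [grad_per hu hper p k, show u (p + ivec k) = u p from hper p k]

def frac (p : E2) : E2 := p - ivec (fun i => ⌊p i⌋)

lemma frac_add (p : E2) : frac p + ivec (fun i => ⌊p i⌋) = p := by
  simp [frac]

lemma frac_apply (p : E2) (i : Fin 2) : frac p i = Int.fract (p i) := by
  simp only [frac, PiLp.sub_apply, ivec_apply, Int.fract]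

lemma frac_mem (p : E2) (i : Fin 2) : frac p i ∈ Set.Ico (0:ℝ) 1 := by
  rw [frac_apply]
  exact ⟨Int.fract_nonneg _, Int.fract_lt_one _⟩

lemma u_frac (hper : DoublyPeriodic u) (p : E2) : u (frac p) = u p := by
  conv_rhs => rw [← frac_add p]
  exact (hper (frac p) _).symm

lemma grad_frac (hu : ContDiff ℝ (⊤ : ℕ∞) u) (hper : DoublyPeriodic u) (p : E2) :
    gradient u (frac p) = gradient u p := by
  conv_rhs => rw [← frac_add p]
  exact (grad_per hu hper (frac p) _).symm

/-! ### Monotonicity of `f'/f` and the pivot `t0` -/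

lemma antitoneOn_g (hI : IsOpen I) (hf : ContDiffOn ℝ (⊤ : ℕ∞) f I)
    (hfpos : ∀ t ∈ I, 0 < f t)
    (hlog : ∀ t ∈ I, deriv (deriv (fun s => Real.log (f s))) t ≤ 0)
    {a b : ℝ} (hab : Set.Icc a b ⊆ I) :
    AntitoneOn (fun t => deriv f t / f t) (Set.Icc a b) := by
  have hf2 : ContDiffOn ℝ 2 f I := hf.of_le (by exact WithTop.coe_le_coe.2 le_top)
  have hdf : ∀ t ∈ I, DifferentiableAt ℝ f t := fun t ht =>
    (hf2.differentiableOn (by norm_num)).differentiableAt (hI.mem_nhds ht)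
  have hlogf : ContDiffOn ℝ 2 (fun s => Real.log (f s)) I :=
    hf2.log (fun t ht => (hfpos t ht).ne')
  have hL : ContDiffOn ℝ 1 (deriv fun s => Real.log (f s)) I :=
    hlogf.deriv_of_isOpen hI (by norm_num)
  have hEq : ∀ t ∈ I, deriv (fun s => Real.log (f s)) t = deriv f t / f t := fun t ht =>
    ((hdf t ht).hasDerivAt.log (hfpos t ht).ne').deriv
  have hanti : AntitoneOn (deriv fun s => Real.log (f s)) (Set.Icc a b) := by
    apply antitoneOn_of_deriv_nonpos (convex_Icc a b) (hL.continuousOn.mono hab)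
    · intro x hx
      exact ((hL.differentiableOn (by norm_num)).differentiableAt
        (hI.mem_nhds (hab (interior_subset hx)))).differentiableWithinAt
    · intro x hx
      exact hlog x (hab (interior_subset hx))
  intro x hx y hy hxy
  show deriv f y / f y ≤ deriv f x / f x
  rw [← hEq x (hab hx), ← hEq y (hab hy)]
  exact hanti hx hy hxy

lemma exists_t0 {g : ℝ → ℝ} {a b : ℝ} (hg : AntitoneOn g (Set.Icc a b)) :
    ∃ t0 : ℝ, ∀ t ∈ Set.Icc a b, (t0 < t → g t ≤ 0) ∧ (t < t0 → 0 ≤ g t) := by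
  set s := {t ∈ Set.Icc a b | 0 < g t} with hs_def
  by_cases hs : s.Nonempty
  · refine ⟨sSup s, fun t ht => ⟨fun hlt => ?_, fun hlt => ?_⟩⟩
    · by_contra hgt
      push_neg at hgt
      have hts : t ∈ s := ⟨ht, hgt⟩
      have hbdd : BddAbove s := ⟨b, fun x hx => hx.1.2⟩
      exact absurd (le_csSup hbdd hts) (not_le.2 hlt)
    · obtain ⟨x, hxs, htx⟩ := exists_lt_of_lt_csSup hs hlt
      exact le_trans hxs.2.le (hg ht hxs.1 htx.le)
  · refine ⟨a, fun t ht => ⟨fun _ => ?_, fun hlt => absurd ht.1 (not_le.2 hlt)⟩⟩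
    by_contra hgt
    push_neg at hgt
    exact hs ⟨t, ht, hgt⟩

/-! ### The pointwise sign inequality -/

lemma sign_ineq {H d F0 w n t t0 : ℝ} (hF0 : 0 < F0) (hw : 0 < w) (hwF : w ≤ F0)
    (hH : H ^ 2 ≤ d ^ 2 / F0 ^ 2)
    (hsign : (t0 < t → d / F0 ≤ 0) ∧ (t < t0 → 0 ≤ d / F0)) (hn : 0 ≤ n) :
    (t - t0) * (H + d / (2 * w) * (2 + n / F0 ^ 2)) ≤ 0 := by
  have habs : |H| ≤ |d / F0| := by
    have h1 : H ^ 2 ≤ (d / F0) ^ 2 := by rw [div_pow]; exact hH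
    have := Real.sqrt_le_sqrt h1
    rwa [Real.sqrt_sq_eq_abs, Real.sqrt_sq_eq_abs] at this
  rcases lt_trichotomy t t0 with hlt | heq | hgt
  · have hdF : 0 ≤ d / F0 := hsign.2 hlt
    have hd : 0 ≤ d := by
      have h := (div_mul_cancel₀ d hF0.ne').symm
      rw [h]; exact mul_nonneg hdF hF0.le
    have hHlb : -(d / F0) ≤ H := by
      have := (abs_le.1 habs).1
      rwa [abs_of_nonneg hdF] at this
    have hS : d / F0 ≤ d / (2 * w) * (2 + n / F0 ^ 2) := by
      rw [div_mul_eq_mul_div, div_le_div_iff₀ hF0 (by positivity)]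
      have hnF : 0 ≤ n / F0 := by positivity
      have hkey : 2 * w ≤ (2 + n / F0 ^ 2) * F0 := by
        have hexp : (2 + n / F0 ^ 2) * F0 = 2 * F0 + n / F0 := by
          field_simp
        linarith
      nlinarith [mul_le_mul_of_nonneg_left hkey hd]
    have hfin : 0 ≤ H + d / (2 * w) * (2 + n / F0 ^ 2) := by linarith
    exact mul_nonpos_of_nonpos_of_nonneg (by linarith) hfin
  · simp [heq]
  · have hdF : d / F0 ≤ 0 := hsign.1 hgt
    have hd : d ≤ 0 := by
      have h := (div_mul_cancel₀ d hF0.ne').symm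
      rw [h]; exact mul_nonpos_of_nonpos_of_nonneg hdF hF0.le
    have hHub : H ≤ -(d / F0) := by
      have := (abs_le.1 habs).2
      rwa [abs_of_nonpos hdF] at this
    have hS : d / (2 * w) * (2 + n / F0 ^ 2) ≤ d / F0 := by
      rw [div_mul_eq_mul_div, div_le_div_iff₀ (by positivity) hF0]
      have hnF : 0 ≤ n / F0 := by positivity
      have hkey : 2 * w ≤ (2 + n / F0 ^ 2) * F0 := by
        have hexp : (2 + n / F0 ^ 2) * F0 = 2 * F0 + n / F0 := by
          field_simp
        linarith
      nlinarith [mul_le_mul_of_nonpos_left hkey hd]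
    have hfin : H + d / (2 * w) * (2 + n / F0 ^ 2) ≤ 0 := by linarith
    exact mul_nonpos_of_nonneg_of_nonpos (by linarith) hfin

/-! ### Transfer to `ℝ × ℝ` and the divergence theorem on the torus -/

def Gc : (ℝ × ℝ) ≃L[ℝ] E2 :=
  (ContinuousLinearEquiv.finTwoArrow ℝ ℝ).symm.trans
    (EuclideanSpace.equiv (Fin 2) ℝ).symm

lemma Gc_apply_zero (z : ℝ × ℝ) : Gc z 0 = z.1 := rfl
lemma Gc_apply_one (z : ℝ × ℝ) : Gc z 1 = z.2 := rfl

lemma Gc_e0 : Gc ((1:ℝ), (0:ℝ)) = e2 0 := by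
  apply E2_ext <;> simp [Gc_apply_zero, Gc_apply_one, e2, EuclideanSpace.single_apply]

lemma Gc_e1 : Gc ((0:ℝ), (1:ℝ)) = e2 1 := by
  apply E2_ext <;> simp [Gc_apply_zero, Gc_apply_one, e2, EuclideanSpace.single_apply]

lemma Gc_shift_y (x : ℝ) : Gc (x, (1:ℝ)) = Gc (x, 0) + ivec ![0, 1] := by
  apply E2_ext <;>
    simp [Gc_apply_zero, Gc_apply_one, PiLp.add_apply, ivec]
lemma Gc_shift_x (y : ℝ) : Gc ((1:ℝ), y) = Gc (0, y) + ivec ![1, 0] := by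
  apply E2_ext <;>
    simp [Gc_apply_zero, Gc_apply_one, PiLp.add_apply, ivec]

lemma torus_div_int {V : E2 → E2} (hVc : Continuous V)
    (hVd : ∀ p, DifferentiableAt ℝ V p)
    (hdivc : Continuous (fun p => divergence V p))
    (hVper : ∀ p k, V (p + ivec k) = V p) :
    (∫ z in Set.Icc ((0:ℝ), (0:ℝ)) (1, 1), divergence V (Gc z)) = 0 := by
  set f' : ℝ × ℝ → (ℝ × ℝ) →L[ℝ] ℝ := fun z =>
    ((EuclideanSpace.proj (0 : Fin 2)).comp
      ((fderiv ℝ V (Gc z)).comp (Gc : (ℝ × ℝ) →L[ℝ] E2))) with hf'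
  set g' : ℝ × ℝ → (ℝ × ℝ) →L[ℝ] ℝ := fun z =>
    ((EuclideanSpace.proj (1 : Fin 2)).comp
      ((fderiv ℝ V (Gc z)).comp (Gc : (ℝ × ℝ) →L[ℝ] E2))) with hg'
  have hint_eq : ∀ z : ℝ × ℝ, f' z (1, 0) + g' z (0, 1) = divergence V (Gc z) := by
    intro z
    rw [divergence_apply]
    simp only [hf', hg', ContinuousLinearMap.comp_apply, ContinuousLinearEquiv.coe_coe]
    rw [Gc_e0, Gc_e1]
    rfl
  have hdiv := MeasureTheory.integral_divergence_prod_Icc_of_hasFDerivAt_off_countable_of_le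
    (f := fun z => V (Gc z) 0) (g := fun z => V (Gc z) 1) (f' := f') (g' := g')
    ((0:ℝ), (0:ℝ)) ((1:ℝ), (1:ℝ)) (by constructor <;> norm_num)
    ∅ Set.countable_empty
    (((EuclideanSpace.proj (0 : Fin 2)).continuous.comp
      (hVc.comp Gc.continuous)).continuousOn)
    (((EuclideanSpace.proj (1 : Fin 2)).continuous.comp
      (hVc.comp Gc.continuous)).continuousOn)
    (by
      intro z hz
      exact ((EuclideanSpace.proj (0 : Fin 2)).hasFDerivAt.comp z
        (((hVd (Gc z)).hasFDerivAt).comp z Gc.hasFDerivAt)))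
    (by
      intro z hz
      exact ((EuclideanSpace.proj (1 : Fin 2)).hasFDerivAt.comp z
        (((hVd (Gc z)).hasFDerivAt).comp z Gc.hasFDerivAt)))
    (by
      have h : (fun z : ℝ × ℝ => f' z (1, 0) + g' z (0, 1))
          = fun z => divergence V (Gc z) := funext hint_eq
      rw [h]
      exact ((hdivc.comp Gc.continuous).continuousOn).integrableOn_compact isCompact_Icc)
  rw [show (fun z : ℝ × ℝ => f' z (1, 0) + g' z (0, 1))
      = fun z => divergence V (Gc z) from funext hint_eq] at hdiv
  rw [hdiv]
  have hb1 : ∀ x : ℝ, V (Gc (x, (1:ℝ))) 1 = V (Gc (x, (0:ℝ))) 1 := by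
    intro x; rw [Gc_shift_y, hVper]
  have hb2 : ∀ y : ℝ, V (Gc ((1:ℝ), y)) 0 = V (Gc ((0:ℝ), y)) 0 := by
    intro y; rw [Gc_shift_x, hVper]
  have e1 : (∫ x in (0:ℝ)..1, V (Gc (x, (1:ℝ))) 1) = ∫ x in (0:ℝ)..1, V (Gc (x, (0:ℝ))) 1 :=
    intervalIntegral.integral_congr (fun x _ => hb1 x)
  have e2' : (∫ y in (0:ℝ)..1, V (Gc ((1:ℝ), y)) 0) = ∫ y in (0:ℝ)..1, V (Gc ((0:ℝ), y)) 0 :=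
    intervalIntegral.integral_congr (fun y _ => hb2 y)
  simp only at e1 e2' ⊢
  rw [e1, e2']
  ring

/-! ### Continuous nonnegative functions with vanishing integral -/

lemma zero_of_nonneg {h : ℝ × ℝ → ℝ} (hc : Continuous h) (hnn : ∀ z, 0 ≤ h z)
    (hint : (∫ z in Set.Icc ((0:ℝ), (0:ℝ)) (1, 1), h z) = 0)
    {z0 : ℝ × ℝ} (hx0 : 0 ≤ z0.1) (hx1 : z0.1 < 1) (hy0 : 0 ≤ z0.2) (hy1 : z0.2 < 1) :
    h z0 = 0 := by
  by_contra hne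
  have hpos : 0 < h z0 := (hnn z0).lt_of_ne (Ne.symm hne)
  have hopen : IsOpen {z : ℝ × ℝ | 0 < h z} := isOpen_lt continuous_const hc
  obtain ⟨δ, hδ, hball⟩ := Metric.isOpen_iff.1 hopen z0 hpos
  set r : ℝ := min (δ / 2) (min (1 - z0.1) (1 - z0.2)) with hr
  have hrpos : 0 < r := lt_min (by linarith) (lt_min (by linarith) (by linarith))
  set Rect : Set (ℝ × ℝ) := Set.Ioo z0.1 (z0.1 + r) ×ˢ Set.Ioo z0.2 (z0.2 + r) with hRect
  have hsub1 : Rect ⊆ {z : ℝ × ℝ | 0 < h z} := by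
    intro z hz
    apply hball
    rw [Metric.mem_ball, Prod.dist_eq]
    have h1 : dist z.1 z0.1 < r := by
      rw [Real.dist_eq, abs_lt]; exact ⟨by linarith [hz.1.1], by linarith [hz.1.2]⟩
    have h2 : dist z.2 z0.2 < r := by
      rw [Real.dist_eq, abs_lt]; exact ⟨by linarith [hz.2.1], by linarith [hz.2.2]⟩
    have hrδ : r ≤ δ / 2 := min_le_left _ _
    exact max_lt (by linarith) (by linarith)
  have hsub2 : Rect ⊆ Set.Icc ((0:ℝ), (0:ℝ)) (1, 1) := by
    intro z hz
    have hr1 : r ≤ 1 - z0.1 := le_trans (min_le_right _ _) (min_le_left _ _)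
    have hr2 : r ≤ 1 - z0.2 := le_trans (min_le_right _ _) (min_le_right _ _)
    obtain ⟨⟨ha1, hb1⟩, ha2, hb2⟩ := hz
    constructor
    · exact ⟨show (0:ℝ) ≤ z.1 by linarith, show (0:ℝ) ≤ z.2 by linarith⟩
    · exact ⟨show z.1 ≤ (1:ℝ) by linarith, show z.2 ≤ (1:ℝ) by linarith⟩
  have hInt : IntegrableOn h (Set.Icc ((0:ℝ), (0:ℝ)) (1, 1)) volume :=
    hc.continuousOn.integrableOn_compact isCompact_Icc
  have hae : h =ᵐ[volume.restrict (Set.Icc ((0:ℝ), (0:ℝ)) (1, 1))] 0 :=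
    (setIntegral_eq_zero_iff_of_nonneg_ae
      (Filter.Eventually.of_forall (fun z => hnn z)) hInt).1 hint
  have hnull : volume.restrict (Set.Icc ((0:ℝ), (0:ℝ)) (1, 1)) {z | h z ≠ 0} = 0 := by
    rw [Filter.EventuallyEq, ae_iff] at hae
    simpa using hae
  have hRect_null : volume.restrict (Set.Icc ((0:ℝ), (0:ℝ)) (1, 1)) Rect = 0 :=
    measure_mono_null (fun z hz => ne_of_gt (hsub1 hz)) hnull
  rw [Measure.restrict_apply' measurableSet_Icc, Set.inter_eq_left.2 hsub2] at hRect_null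
  have hvol : volume Rect = ENNReal.ofReal r * ENNReal.ofReal r := by
    rw [hRect, Measure.volume_eq_prod, Measure.prod_prod, Real.volume_Ioo, Real.volume_Ioo]
    simp
  rw [hvol] at hRect_null
  have hposvol : (0 : ENNReal) < ENNReal.ofReal r * ENNReal.ofReal r := by
    have := ENNReal.ofReal_pos.2 hrpos
    exact ENNReal.mul_pos this.ne' this.ne'
  exact absurd hRect_null hposvol.ne'

/-! ### Extrema of a doubly periodic function -/

lemma exists_bounds (huc : Continuous u) (hper : DoublyPeriodic u) :
    ∃ pa pb : E2, ∀ p, u p ∈ Set.Icc (u pa) (u pb) := by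
  set K : Set E2 := (fun z : ℝ × ℝ => Gc z) '' (Set.Icc ((0:ℝ), (0:ℝ)) (1, 1)) with hK_def
  have hK : IsCompact K := isCompact_Icc.image Gc.continuous
  have hKne : K.Nonempty := ⟨Gc (0, 0), ⟨(0, 0), ⟨le_refl _, by constructor <;> norm_num⟩, rfl⟩⟩
  obtain ⟨pb, hpbK, hpb⟩ := hK.exists_isMaxOn hKne huc.continuousOn
  obtain ⟨pa, hpaK, hpa⟩ := hK.exists_isMinOn hKne huc.continuousOn
  refine ⟨pa, pb, fun p => ?_⟩
  have hfr : frac p ∈ K := by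
    refine ⟨(frac p 0, frac p 1), ?_, ?_⟩
    · constructor
      · exact ⟨(frac_mem p 0).1, (frac_mem p 1).1⟩
      · exact ⟨(frac_mem p 0).2.le, (frac_mem p 1).2.le⟩
    · exact E2_ext rfl rfl
  rw [← u_frac hper p]
  exact ⟨hpa hfr, hpb hfr⟩

end CB

end AuxCB

/-- Calabi–Bernstein uniqueness (Theorem 4.1, first part) on the flat torus:
if `(log f)'' ≤ 0` on `I` and `u` is a smooth doubly periodic entire solution of
`H(u)² ≤ f'(u)²/f(u)²`, `|Du| < f(u)`, then `u` is constant. -/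
theorem stmt3 (I : Set ℝ) (hI : IsOpen I) (hIc : I.OrdConnected)
    (f : ℝ → ℝ) (hf : ContDiffOn ℝ (⊤ : ℕ∞) f I) (hfpos : ∀ t ∈ I, 0 < f t)
    (hlog : ∀ t ∈ I, deriv (deriv (fun s => Real.log (f s))) t ≤ 0)
    (u : E2 → ℝ) (hu : ContDiff ℝ (⊤ : ℕ∞) u) (hrange : ∀ p, u p ∈ I)
    (hper : DoublyPeriodic u)
    (hgrad : ∀ p, ‖gradient u p‖ < f (u p))
    (hH : ∀ p, (Hmean f u p) ^ 2 ≤ (deriv f (u p)) ^ 2 / (f (u p)) ^ 2) :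
    ∃ c : ℝ, ∀ p, u p = c := by
  classical
  -- extrema of u
  obtain ⟨pa, pb, hbounds⟩ := CB.exists_bounds (hu.continuous) hper
  have hab : Set.Icc (u pa) (u pb) ⊆ I := hIc.out (hrange pa) (hrange pb)
  have hanti := CB.antitoneOn_g hI hf hfpos hlog hab
  obtain ⟨t0, ht0⟩ := CB.exists_t0 hanti
  -- the vector field
  set V : E2 → E2 := fun q => (u q - t0) • CB.W f u q with hV
  have hWd : ∀ p, DifferentiableAt ℝ (CB.W f u) p := fun p =>
    (CB.contDiffAt_W hI hf hfpos hu hrange hgrad p).differentiableAt two_ne_zero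
  have hVd : ∀ p, DifferentiableAt ℝ V p := fun p =>
    (CB.contDiffAt_FV hI hf hfpos hu hrange hgrad t0 p).differentiableAt two_ne_zero
  have hVc : Continuous V := by
    rw [continuous_iff_continuousAt]
    exact fun p => (hVd p).continuousAt
  have hdivc : Continuous (fun p => divergence V p) :=
    CB.continuous_div_FV hI hf hfpos hu hrange hgrad t0
  have hVper : ∀ p k, V (p + CB.ivec k) = V p := by
    intro p k
    simp only [hV]
    rw [CB.W_per hu hper f p k, show u (p + CB.ivec k) = u p from hper p k]
  -- pointwise decomposition of div V
  have hinner : ∀ p, fderiv ℝ u p (CB.W f u p)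
      = (2 * f (u p) * Real.sqrt ((f (u p)) ^ 2 - ‖gradient u p‖ ^ 2))⁻¹
        * ‖gradient u p‖ ^ 2 := by
    intro p
    have h1 : fderiv ℝ u p (CB.W f u p)
        = inner ℝ (gradient u p) (CB.W f u p) := by
      have h2 : fderiv ℝ u p = (InnerProductSpace.toDual ℝ E2) (gradient u p) :=
        ((InnerProductSpace.toDual ℝ E2).apply_symm_apply _).symm
      rw [h2]
      rfl
    rw [h1]
    show (inner ℝ (gradient u p)
      ((2 * f (u p) * Real.sqrt ((f (u p)) ^ 2 - ‖gradient u p‖ ^ 2))⁻¹ • gradient u p) : ℝ) = _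
    rw [real_inner_smul_right, real_inner_self_eq_norm_sq]
  have hdecomp : ∀ p, divergence V p
      = (2 * f (u p) * Real.sqrt ((f (u p)) ^ 2 - ‖gradient u p‖ ^ 2))⁻¹
          * ‖gradient u p‖ ^ 2
        + (u p - t0) * divergence (CB.W f u) p := by
    intro p
    rw [hV]
    rw [divergence_smul (fun q => u q - t0) (CB.W f u) p
      ((hu.differentiable (by simp) p).sub_const t0) (hWd p)]
    congr 1
    rw [fderiv_sub_const]
    exact hinner p
  -- sign inequality
  have hsign : ∀ p, (u p - t0) * (Hmean f u p + CB.S f u p) ≤ 0 := by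
    intro p
    have hprop := ht0 (u p) (hbounds p)
    exact CB.sign_ineq (hfpos _ (hrange p))
      (CB.w_pos hI hf hfpos hu hrange hgrad p)
      (CB.w_le hI hf hfpos hu hrange hgrad p)
      (hH p) ⟨hprop.1, hprop.2⟩ (by positivity)
  have hdivW : ∀ p, divergence (CB.W f u) p = -(Hmean f u p + CB.S f u p) := by
    intro p
    rw [CB.Hmean_eq]
    ring
  have hApos : ∀ p, (0:ℝ) < (2 * f (u p)
      * Real.sqrt ((f (u p)) ^ 2 - ‖gradient u p‖ ^ 2))⁻¹ := by
    intro p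
    have h1 := hfpos _ (hrange p)
    have h2 := CB.w_pos hI hf hfpos hu hrange hgrad p
    positivity
  have hlower : ∀ p, (2 * f (u p) * Real.sqrt ((f (u p)) ^ 2 - ‖gradient u p‖ ^ 2))⁻¹
      * ‖gradient u p‖ ^ 2 ≤ divergence V p := by
    intro p
    rw [hdecomp p, hdivW p]
    have := hsign p
    nlinarith
  have hnn : ∀ p, 0 ≤ divergence V p := by
    intro p
    refine le_trans ?_ (hlower p)
    have := hApos p
    positivity
  -- the integral vanishes
  have hint := CB.torus_div_int hVc hVd hdivc hVper
  -- gradient vanishes everywhere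
  have hgradzero : ∀ p, gradient u p = 0 := by
    intro p
    have hz0 : divergence V (CB.Gc (CB.frac p 0, CB.frac p 1)) = 0 :=
      CB.zero_of_nonneg (hdivc.comp CB.Gc.continuous) (fun z => hnn (CB.Gc z)) hint
        (CB.frac_mem p 0).1 (CB.frac_mem p 0).2 (CB.frac_mem p 1).1 (CB.frac_mem p 1).2
    have hGfrac : CB.Gc (CB.frac p 0, CB.frac p 1) = CB.frac p := E2_ext rfl rfl
    rw [hGfrac] at hz0
    have hA := hlower (CB.frac p)
    rw [hz0] at hA
    have hApos' := hApos (CB.frac p)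
    have hnorm : ‖gradient u (CB.frac p)‖ ^ 2 ≤ 0 := by
      by_contra hcon
      push_neg at hcon
      nlinarith
    have : gradient u (CB.frac p) = 0 := by
      have := norm_nonneg (gradient u (CB.frac p))
      have hn0 : ‖gradient u (CB.frac p)‖ = 0 := by nlinarith
      exact norm_eq_zero.1 hn0
    rw [← CB.grad_frac hu hper p]
    exact this
  have hfderiv : ∀ p, fderiv ℝ u p = 0 := by
    intro p
    have h2 : fderiv ℝ u p = (InnerProductSpace.toDual ℝ E2) (gradient u p) :=
      ((InnerProductSpace.toDual ℝ E2).apply_symm_apply _).symm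
    rw [h2, hgradzero p, map_zero]
  exact ⟨u 0, fun p => is_const_of_fderiv_eq_zero (hu.differentiable (by simp)) hfderiv p 0⟩
end

section
/- Let $I \subseteq \mathbb{R}$ be an open interval and $f : I \to (0,\infty)$ a smooth function with $(\log f)''(t) \le 0$ for all $t \in I$, and suppose $\alpha := \inf_{t \in I} \dfrac{f'(t)^2}{f(t)^2} > 0$. Let $u : \mathbb{R}^2 \to \mathbb{R}$ be a smooth doubly periodic function with $u(\mathbb{R}^2) \subseteq I$ and $|Du| < f(u)$ everywhere. If $H(u)^2 \le \alpha$ at every point of $\mathbb{R}^2$, then $u$ is constant. -/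
noncomputable section Stmt5Aux

open MeasureTheory Set

namespace Stmt5

/-- The linear inclusion `ℝ × ℝ → E2`. -/
def Lm : ℝ × ℝ →L[ℝ] E2 :=
  (ContinuousLinearMap.fst ℝ ℝ ℝ).smulRight (EuclideanSpace.single 0 1)
    + (ContinuousLinearMap.snd ℝ ℝ ℝ).smulRight (EuclideanSpace.single 1 1)

lemma Lm_apply (x y : ℝ) (i : Fin 2) : Lm (x, y) i = ![x, y] i := by
  fin_cases i <;> simp [Lm, EuclideanSpace.single_apply]

/-- The integer translation vector. -/
def kvec (k : Fin 2 → ℤ) : E2 := (WithLp.equiv 2 (Fin 2 → ℝ)).symm (fun i => (k i : ℝ))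

lemma kvec_apply (k : Fin 2 → ℤ) (i : Fin 2) : kvec k i = (k i : ℝ) := rfl

lemma Lm_add_right (x y : ℝ) : Lm (x + 1, y) = Lm (x, y) + kvec ![1, 0] := by
  apply PiLp.ext
  intro i
  have h1 : (Lm (x, y) + kvec ![1, 0]) i = Lm (x, y) i + kvec ![1, 0] i := rfl
  rw [h1, kvec_apply]
  fin_cases i <;> simp [Lm_apply]

lemma Lm_add_up (x y : ℝ) : Lm (x, y + 1) = Lm (x, y) + kvec ![0, 1] := by
  apply PiLp.ext
  intro i
  have h1 : (Lm (x, y) + kvec ![0, 1]) i = Lm (x, y) i + kvec ![0, 1] i := rfl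
  rw [h1, kvec_apply]
  fin_cases i <;> simp [Lm_apply]

lemma Lm_e1 : Lm (1, 0) = EuclideanSpace.single 0 1 := by
  apply PiLp.ext
  intro i
  fin_cases i <;> simp [Lm_apply, EuclideanSpace.single_apply]

lemma Lm_e2 : Lm (0, 1) = EuclideanSpace.single 1 1 := by
  apply PiLp.ext
  intro i
  fin_cases i <;> simp [Lm_apply, EuclideanSpace.single_apply]

lemma trace2 (A : E2 →L[ℝ] E2) :
    LinearMap.trace ℝ E2 A.toLinearMap
      = A (EuclideanSpace.single 0 1) 0 + A (EuclideanSpace.single 1 1) 1 := by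
  rw [LinearMap.trace_eq_matrix_trace ℝ ((EuclideanSpace.basisFun (Fin 2) ℝ).toBasis)]
  simp [Matrix.trace, LinearMap.toMatrix_apply, Fin.sum_univ_two]

lemma divergence_eq (V : E2 → E2) (p : E2) :
    divergence V p
      = fderiv ℝ V p (EuclideanSpace.single 0 1) 0 + fderiv ℝ V p (EuclideanSpace.single 1 1) 1 :=
  trace2 _

/-- A continuous nonnegative function with nonpositive integral over a compact set vanishes
on the interior. -/
lemma eq_zero_of_setIntegral_nonpos {h : ℝ × ℝ → ℝ} (hc : Continuous h)
    (h0 : ∀ z, 0 ≤ h z) {K : Set (ℝ × ℝ)} (hK : IsCompact K)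
    (hint : ∫ z in K, h z ≤ 0) {z0 : ℝ × ℝ} (hz0 : z0 ∈ interior K) : h z0 = 0 := by
  by_contra hne
  have hU : IsOpen (interior K ∩ {z | h z ≠ 0}) :=
    isOpen_interior.inter (isOpen_compl_singleton.preimage hc)
  have hUpos : 0 < volume (interior K ∩ {z | h z ≠ 0}) :=
    hU.measure_pos _ ⟨z0, hz0, hne⟩
  have hmeas : 0 < volume (Function.support h ∩ K) := by
    refine lt_of_lt_of_le hUpos (measure_mono ?_)
    rintro z ⟨hz1, hz2⟩
    exact ⟨hz2, interior_subset hz1⟩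
  have hIpos : 0 < ∫ z in K, h z := by
    rw [setIntegral_pos_iff_support_of_nonneg_ae (Filter.Eventually.of_forall h0)
      (hc.continuousOn.integrableOn_compact hK)]
    exact hmeas
  linarith

/-- The vector field appearing in `Hmean`. -/
def Vf (f : ℝ → ℝ) (u : E2 → ℝ) : E2 → E2 :=
  fun q => (2 * f (u q) * Real.sqrt ((f (u q)) ^ 2 - ‖gradient u q‖ ^ 2))⁻¹ • gradient u q

lemma Hmean_eq (f : ℝ → ℝ) (u : E2 → ℝ) (p : E2) :
    Hmean f u p = - divergence (Vf f u) p
      - deriv f (u p) / (2 * Real.sqrt ((f (u p)) ^ 2 - ‖gradient u p‖ ^ 2)) *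
        (2 + ‖gradient u p‖ ^ 2 / (f (u p)) ^ 2) := rfl

/-- Divergence integral of a smooth doubly periodic vector field over a period box vanishes. -/
lemma integral_div_zero {V : E2 → E2} (hV : ContDiff ℝ (⊤ : ℕ∞) V)
    (hper1 : ∀ p, V (p + kvec ![1, 0]) = V p)
    (hper2 : ∀ p, V (p + kvec ![0, 1]) = V p) (a b : ℝ) :
    ∫ z in Icc (a, b) (a + 1, b + 1), divergence V (Lm z) = 0 := by
  set f1 : ℝ × ℝ → ℝ := fun z => V (Lm z) 0 with hf1
  set f2 : ℝ × ℝ → ℝ := fun z => V (Lm z) 1 with hf2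
  set f1' : ℝ × ℝ → (ℝ × ℝ →L[ℝ] ℝ) :=
    fun z => (EuclideanSpace.proj (0 : Fin 2)).comp ((fderiv ℝ V (Lm z)).comp Lm) with hf1'
  set f2' : ℝ × ℝ → (ℝ × ℝ →L[ℝ] ℝ) :=
    fun z => (EuclideanSpace.proj (1 : Fin 2)).comp ((fderiv ℝ V (Lm z)).comp Lm) with hf2'
  have hVd : Differentiable ℝ V := hV.differentiable (by simp)
  have hd1 : ∀ z : ℝ × ℝ, HasFDerivAt f1 (f1' z) z := by
    intro z
    have h := ((EuclideanSpace.proj (0 : Fin 2)).hasFDerivAt (x := V (Lm z))).comp z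
      (((hVd (Lm z)).hasFDerivAt).comp z Lm.hasFDerivAt)
    exact h
  have hd2 : ∀ z : ℝ × ℝ, HasFDerivAt f2 (f2' z) z := by
    intro z
    have h := ((EuclideanSpace.proj (1 : Fin 2)).hasFDerivAt (x := V (Lm z))).comp z
      (((hVd (Lm z)).hasFDerivAt).comp z Lm.hasFDerivAt)
    exact h
  have hkey : ∀ z : ℝ × ℝ, f1' z (1, 0) + f2' z (0, 1) = divergence V (Lm z) := by
    intro z
    rw [divergence_eq]
    simp only [hf1', hf2', ContinuousLinearMap.coe_comp', Function.comp_apply]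
    rw [show ((1 : ℝ), (0 : ℝ)) = ((1 : ℝ), (0 : ℝ)) from rfl, Lm_e1, Lm_e2]
    rfl
  have hfdc : Continuous (fderiv ℝ V) := hV.continuous_fderiv (by simp)
  have hc1' : Continuous fun z => f1' z (1, 0) := by
    simp only [hf1', ContinuousLinearMap.coe_comp', Function.comp_apply]
    exact (EuclideanSpace.proj (0 : Fin 2)).continuous.comp
      (((hfdc.comp Lm.continuous).clm_apply continuous_const))
  have hc2' : Continuous fun z => f2' z (0, 1) := by
    simp only [hf2', ContinuousLinearMap.coe_comp', Function.comp_apply]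
    exact (EuclideanSpace.proj (1 : Fin 2)).continuous.comp
      (((hfdc.comp Lm.continuous).clm_apply continuous_const))
  have Hi : IntegrableOn (fun x => f1' x (1, 0) + f2' x (0, 1))
      (Icc ((a : ℝ), (b : ℝ)) (a + 1, b + 1)) volume :=
    ((hc1'.add hc2').continuousOn).integrableOn_compact isCompact_Icc
  have hle : ((a : ℝ), (b : ℝ)) ≤ (a + 1, b + 1) := ⟨by norm_num, by norm_num⟩
  have hmain := integral_divergence_prod_Icc_of_hasFDerivAt_off_countable_of_le
    f1 f2 f1' f2' (a, b) (a + 1, b + 1) hle ∅ Set.countable_empty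
    ((EuclideanSpace.proj (0 : Fin 2)).continuous.comp
      (hVd.continuous.comp Lm.continuous)).continuousOn
    ((EuclideanSpace.proj (1 : Fin 2)).continuous.comp
      (hVd.continuous.comp Lm.continuous)).continuousOn
    (fun x _ => hd1 x) (fun x _ => hd2 x) Hi
  have hcongr : (fun z : ℝ × ℝ => divergence V (Lm z))
      = fun x => f1' x (1, 0) + f2' x (0, 1) := funext fun z => (hkey z).symm
  rw [hcongr, hmain]
  have e1 : (fun x => f2 (x, (a, b).2 + 1)) = fun x => f2 (x, (a, b).2) := by
    funext x
    simp only [hf2]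
    rw [Lm_add_up, hper2]
  have e2 : (fun y => f1 ((a, b).1 + 1, y)) = fun y => f1 ((a, b).1, y) := by
    funext y
    simp only [hf1]
    rw [Lm_add_right, hper1]
  simp only [show ((a, b) : ℝ × ℝ).1 = a from rfl, show ((a, b) : ℝ × ℝ).2 = b from rfl] at *
  rw [show (fun x => f2 (x, b + 1)) = fun x => f2 (x, b) from e1,
    show (fun y => f1 (a + 1, y)) = fun y => f1 (a, y) from e2]
  ring


lemma arith {a F G S d D H ε : ℝ} (ha : 0 < a) (hF : 0 < F) (hG0 : 0 ≤ G)
    (hS : 0 < S) (hSF : S ≤ F) (hH : |H| ≤ a) (hsgn : a * F ≤ ε * d) (hεabs : |ε| = 1)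
    (hHeq : H = -D - d / (2 * S) * (2 + G ^ 2 / F ^ 2)) :
    a * (G ^ 2 / F ^ 2) / 2 ≤ -(ε * D) := by
  set w : ℝ := G ^ 2 / F ^ 2 with hwdef
  have hw0 : 0 ≤ w := by positivity
  have h3 : a * (2 + w) / 2 ≤ a * (2 + w) * F / (2 * S) := by
    rw [div_le_div_iff₀ (by norm_num) (by positivity)]
    nlinarith [mul_nonneg (mul_nonneg ha.le (by linarith : (0:ℝ) ≤ 2 + w)) (sub_nonneg.mpr hSF)]
  have h2 : a * (2 + w) * F / (2 * S) ≤ (ε * d) * ((2 + w) / (2 * S)) := by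
    have h := mul_le_mul_of_nonneg_right hsgn (by positivity : (0:ℝ) ≤ (2 + w) / (2 * S))
    calc a * (2 + w) * F / (2 * S) = (a * F) * ((2 + w) / (2 * S)) := by ring
      _ ≤ (ε * d) * ((2 + w) / (2 * S)) := h
  have h4 : -(ε * H) ≤ a := by
    have h5 : |ε * H| ≤ a := by rw [abs_mul, hεabs, one_mul]; exact hH
    linarith [(abs_le.mp h5).1]
  have h6 : d / (2 * S) * (2 + w) = -D - H := by rw [hHeq]; ring
  have h7 : (ε * d) * ((2 + w) / (2 * S)) = -(ε * D) + (-(ε * H)) := by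
    calc (ε * d) * ((2 + w) / (2 * S)) = ε * (d / (2 * S) * (2 + w)) := by ring
      _ = ε * (-D - H) := by rw [h6]
      _ = -(ε * D) + (-(ε * H)) := by ring
  have h8 : a * (2 + w) / 2 = a * w / 2 + a := by ring
  linarith

end Stmt5


end Stmt5Aux

open Stmt5 MeasureTheory Set in
theorem stmt5 (I : Set ℝ) (hI : IsOpen I) (hIc : I.OrdConnected)
    (f : ℝ → ℝ) (hf : ContDiffOn ℝ (⊤ : ℕ∞) f I) (hfpos : ∀ t ∈ I, 0 < f t)
    (hlog : ∀ t ∈ I, deriv (deriv (fun s => Real.log (f s))) t ≤ 0)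
    (α : ℝ) (hαdef : α = sInf ((fun t => (deriv f t) ^ 2 / (f t) ^ 2) '' I))
    (hαpos : 0 < α)
    (u : E2 → ℝ) (hu : ContDiff ℝ (⊤ : ℕ∞) u) (hrange : ∀ p, u p ∈ I)
    (hper : DoublyPeriodic u)
    (hgrad : ∀ p, ‖gradient u p‖ < f (u p))
    (hH : ∀ p, (Hmean f u p) ^ 2 ≤ α) :
    ∃ c : ℝ, ∀ p, u p = c := by
  classical
  -- basic positivity facts
  have hF : ∀ p, 0 < f (u p) := fun p => hfpos _ (hrange p)
  have hq : ∀ p, 0 < (f (u p)) ^ 2 - ‖gradient u p‖ ^ 2 := by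
    intro p
    have h1 := hgrad p
    have h2 : (0 : ℝ) ≤ ‖gradient u p‖ := norm_nonneg _
    nlinarith
  -- `α` is a lower bound
  have halpha : ∀ t ∈ I, α ≤ (deriv f t) ^ 2 / (f t) ^ 2 := by
    intro t ht
    rw [hαdef]
    refine csInf_le ⟨0, ?_⟩ (Set.mem_image_of_mem _ ht)
    rintro x ⟨s, _, rfl⟩
    positivity
  -- smoothness facts
  have contF : ContDiff ℝ (⊤ : ℕ∞) fun p => f (u p) := hf.comp_contDiff hu hrange
  have contg : ContDiff ℝ (⊤ : ℕ∞) (gradient u) := by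
    have h1 : ContDiff ℝ (⊤ : ℕ∞) (fderiv ℝ u) := hu.fderiv_right (by simp)
    have h2 : ContDiff ℝ (⊤ : ℕ∞) (InnerProductSpace.toDual ℝ E2).symm :=
      (InnerProductSpace.toDual ℝ E2).symm.contDiff
    exact h2.comp h1
  have contq : ContDiff ℝ (⊤ : ℕ∞) fun p => (f (u p)) ^ 2 - ‖gradient u p‖ ^ 2 :=
    (contF.pow 2).sub (contg.norm_sq (𝕜 := ℝ))
  have contS : ContDiff ℝ (⊤ : ℕ∞) fun p => Real.sqrt ((f (u p)) ^ 2 - ‖gradient u p‖ ^ 2) := by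
    rw [contDiff_iff_contDiffAt]
    intro p
    exact (Real.contDiffAt_sqrt (hq p).ne').comp p contq.contDiffAt
  have hS : ∀ p, 0 < Real.sqrt ((f (u p)) ^ 2 - ‖gradient u p‖ ^ 2) := fun p =>
    Real.sqrt_pos.mpr (hq p)
  have hden : ∀ p, 2 * f (u p) * Real.sqrt ((f (u p)) ^ 2 - ‖gradient u p‖ ^ 2) ≠ 0 := by
    intro p
    have := hF p
    have := hS p
    positivity
  have contV : ContDiff ℝ (⊤ : ℕ∞) (Vf f u) := by
    exact (((contDiff_const.mul contF).mul contS).inv hden).smul contg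
  -- continuity of `p ↦ deriv f (u p)`
  have contf' : Continuous fun p : E2 => deriv f (u p) := by
    have h1 : ContDiffOn ℝ (⊤ : ℕ∞) (deriv f) I := hf.deriv_of_isOpen hI (by simp)
    exact h1.continuousOn.comp_continuous hu.continuous hrange
  have hne : ∀ p : E2, deriv f (u p) ≠ 0 := by
    intro p h0
    have h1 := halpha _ (hrange p)
    rw [h0] at h1
    norm_num at h1
    linarith
  -- constant sign of f' along u
  set ε : ℝ := if 0 < deriv f (u 0) then 1 else -1 with hεdef
  have hεone : ε = 1 ∨ ε = -1 := by
    by_cases h : 0 < deriv f (u 0)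
    · left; simp [hεdef, h]
    · right; simp [hεdef, h]
  have hεabs : |ε| = 1 := by rcases hεone with h | h <;> simp [h]
  have hsame : ∀ p, 0 < ε * deriv f (u p) := by
    intro p
    by_cases h0 : 0 < deriv f (u 0)
    · rw [hεdef, if_pos h0, one_mul]
      by_contra hle
      push_neg at hle
      have hlt : deriv f (u p) < 0 := lt_of_le_of_ne hle (hne p)
      have : (0 : ℝ) ∈ Set.range fun q : E2 => deriv f (u q) :=
        intermediate_value_univ p 0 contf' ⟨hlt.le, h0.le⟩
      obtain ⟨q, hq0⟩ := this
      exact hne q hq0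
    · rw [hεdef, if_neg h0]
      push_neg at h0
      have h0' : deriv f (u 0) < 0 := lt_of_le_of_ne h0 (hne 0)
      by_contra hle
      push_neg at hle
      have hge : 0 ≤ deriv f (u p) := by nlinarith
      have : (0 : ℝ) ∈ Set.range fun q : E2 => deriv f (u q) :=
        intermediate_value_univ 0 p contf' ⟨h0'.le, hge⟩
      obtain ⟨q, hq0⟩ := this
      exact hne q hq0
  have hsgn : ∀ p, Real.sqrt α * f (u p) ≤ ε * deriv f (u p) := by
    intro p
    have h1 := halpha _ (hrange p)
    have hfp2 : (0:ℝ) < (f (u p)) ^ 2 := pow_pos (hF p) 2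
    have h2 : α * (f (u p)) ^ 2 ≤ (deriv f (u p)) ^ 2 := by
      calc α * (f (u p)) ^ 2 ≤ ((deriv f (u p)) ^ 2 / (f (u p)) ^ 2) * (f (u p)) ^ 2 :=
            mul_le_mul_of_nonneg_right h1 hfp2.le
        _ = (deriv f (u p)) ^ 2 := by rw [div_mul_cancel₀ _ hfp2.ne']
    have h3 : Real.sqrt α * f (u p) = Real.sqrt (α * (f (u p)) ^ 2) := by
      rw [Real.sqrt_mul hαpos.le, Real.sqrt_sq (hF p).le]
    have h4 : Real.sqrt (α * (f (u p)) ^ 2) ≤ |deriv f (u p)| := by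
      rw [← Real.sqrt_sq_eq_abs]
      exact Real.sqrt_le_sqrt h2
    have h5 : |deriv f (u p)| = ε * deriv f (u p) := by
      rw [← abs_of_pos (hsame p), abs_mul, hεabs, one_mul]
    linarith
    -- periodicity of the gradient and of the vector field
  have gper : ∀ (p : E2) (k : Fin 2 → ℤ), gradient u (p + kvec k) = gradient u p := by
    intro p k
    have hfun : (fun q : E2 => u (q + kvec k)) = u := funext fun q => hper q k
    have hud : ∀ x : E2, HasFDerivAt u (fderiv ℝ u x) x := fun x =>
      ((hu.differentiable (by simp)) x).hasFDerivAt
    have h1 : HasFDerivAt (fun q : E2 => u (q + kvec k))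
        ((fderiv ℝ u (p + kvec k)).comp (ContinuousLinearMap.id ℝ E2)) p :=
      (hud (p + kvec k)).comp p ((hasFDerivAt_id p).add_const (kvec k))
    rw [hfun] at h1
    have h2 : fderiv ℝ u p = (fderiv ℝ u (p + kvec k)).comp (ContinuousLinearMap.id ℝ E2) :=
      h1.fderiv
    have h3 : fderiv ℝ u (p + kvec k) = fderiv ℝ u p := by
      rw [h2, ContinuousLinearMap.comp_id]
    show (InnerProductSpace.toDual ℝ E2).symm (fderiv ℝ u (p + kvec k)) = _
    rw [h3]
    rfl
  have uper : ∀ (p : E2) (k : Fin 2 → ℤ), u (p + kvec k) = u p := fun p k => hper p k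
  have Vper : ∀ (p : E2) (k : Fin 2 → ℤ), Vf f u (p + kvec k) = Vf f u p := by
    intro p k
    show (2 * f (u (p + kvec k)) *
        Real.sqrt ((f (u (p + kvec k))) ^ 2 - ‖gradient u (p + kvec k)‖ ^ 2))⁻¹
        • gradient u (p + kvec k) = _
    rw [uper, gper]
    rfl
  -- key pointwise inequality
  have hkeyP : ∀ p : E2,
      Real.sqrt α * (‖gradient u p‖ ^ 2 / (f (u p)) ^ 2) / 2
        ≤ -(ε * divergence (Vf f u) p) := by
    intro p
    have hHabs : |Hmean f u p| ≤ Real.sqrt α := by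
      have h := Real.sqrt_le_sqrt (hH p)
      rwa [Real.sqrt_sq_eq_abs] at h
    have hSF : Real.sqrt ((f (u p)) ^ 2 - ‖gradient u p‖ ^ 2) ≤ f (u p) := by
      have h := Real.sqrt_le_sqrt (show (f (u p)) ^ 2 - ‖gradient u p‖ ^ 2 ≤ (f (u p)) ^ 2 by
        nlinarith [sq_nonneg ‖gradient u p‖])
      rwa [Real.sqrt_sq (hF p).le] at h
    exact arith (Real.sqrt_pos.mpr hαpos) (hF p) (norm_nonneg _) (hS p) hSF hHabs
      (hsgn p) hεabs (Hmean_eq f u p)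
  -- continuity of the divergence
  have hdivcont : Continuous fun p : E2 => divergence (Vf f u) p := by
    have hfdc : Continuous (fderiv ℝ (Vf f u)) := contV.continuous_fderiv (by simp)
    have h1 : Continuous fun p : E2 =>
        fderiv ℝ (Vf f u) p (EuclideanSpace.single 0 1) 0 :=
      (EuclideanSpace.proj (0 : Fin 2)).continuous.comp (hfdc.clm_apply continuous_const)
    have h2 : Continuous fun p : E2 =>
        fderiv ℝ (Vf f u) p (EuclideanSpace.single 1 1) 1 :=
      (EuclideanSpace.proj (1 : Fin 2)).continuous.comp (hfdc.clm_apply continuous_const)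
    have h3 := h1.add h2
    have h4 : (fun p : E2 => divergence (Vf f u) p)
        = fun p : E2 => fderiv ℝ (Vf f u) p (EuclideanSpace.single 0 1) 0
            + fderiv ℝ (Vf f u) p (EuclideanSpace.single 1 1) 1 :=
      funext fun p => divergence_eq _ p
    rw [h4]
    exact h3
  -- the gradient vanishes everywhere
  have hgrad0 : ∀ p : E2, gradient u p = 0 := by
    intro p
    have hzero := integral_div_zero contV (fun q => Vper q ![1, 0]) (fun q => Vper q ![0, 1])
      (p 0 - 1/2) (p 1 - 1/2)
    have hwcont : Continuous fun z : ℝ × ℝ =>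
        Real.sqrt α * (‖gradient u (Lm z)‖ ^ 2 / (f (u (Lm z))) ^ 2) / 2 := by
      apply Continuous.div_const
      apply Continuous.mul continuous_const
      exact Continuous.div ((contg.continuous.norm.pow 2).comp Lm.continuous)
        ((contF.continuous.pow 2).comp Lm.continuous)
        (fun z => (pow_pos (hF (Lm z)) 2).ne')
    have hDcont : Continuous fun z : ℝ × ℝ => -(ε * divergence (Vf f u) (Lm z)) :=
      (continuous_const.mul (hdivcont.comp Lm.continuous)).neg
    have hmono : (∫ z in Icc ((p 0 - 1/2 : ℝ), (p 1 - 1/2 : ℝ)) (p 0 - 1/2 + 1, p 1 - 1/2 + 1),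
          Real.sqrt α * (‖gradient u (Lm z)‖ ^ 2 / (f (u (Lm z))) ^ 2) / 2)
        ≤ ∫ z in Icc ((p 0 - 1/2 : ℝ), (p 1 - 1/2 : ℝ)) (p 0 - 1/2 + 1, p 1 - 1/2 + 1),
            -(ε * divergence (Vf f u) (Lm z)) :=
      setIntegral_mono (hwcont.continuousOn.integrableOn_compact isCompact_Icc)
        (hDcont.continuousOn.integrableOn_compact isCompact_Icc)
        (fun z => hkeyP (Lm z))
    have hrhs : (∫ z in Icc ((p 0 - 1/2 : ℝ), (p 1 - 1/2 : ℝ)) (p 0 - 1/2 + 1, p 1 - 1/2 + 1),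
        -(ε * divergence (Vf f u) (Lm z))) = 0 := by
      rw [integral_neg, integral_const_mul, hzero]
      ring
    have hle0 : (∫ z in Icc ((p 0 - 1/2 : ℝ), (p 1 - 1/2 : ℝ)) (p 0 - 1/2 + 1, p 1 - 1/2 + 1),
        Real.sqrt α * (‖gradient u (Lm z)‖ ^ 2 / (f (u (Lm z))) ^ 2) / 2) ≤ 0 := by
      rw [← hrhs]
      exact hmono
    have hz0mem : ((p 0 : ℝ), (p 1 : ℝ)) ∈
        interior (Icc ((p 0 - 1/2 : ℝ), (p 1 - 1/2 : ℝ)) (p 0 - 1/2 + 1, p 1 - 1/2 + 1)) := by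
      rw [← Icc_prod_Icc, interior_prod_eq, interior_Icc, interior_Icc]
      exact ⟨⟨by linarith, by linarith⟩, ⟨by linarith, by linarith⟩⟩
    have hval := eq_zero_of_setIntegral_nonpos hwcont
      (fun z => by positivity) isCompact_Icc hle0 hz0mem
    have hLp : Lm (p 0, p 1) = p := by
      apply PiLp.ext
      intro i
      fin_cases i <;> simp [Lm_apply]
    rw [hLp] at hval
    have hα' : (0:ℝ) < Real.sqrt α := Real.sqrt_pos.mpr hαpos
    have hw0 : (0:ℝ) ≤ ‖gradient u p‖ ^ 2 / f (u p) ^ 2 := by positivity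
    have hwle : ‖gradient u p‖ ^ 2 / f (u p) ^ 2 ≤ 0 := by nlinarith
    have hweq : ‖gradient u p‖ ^ 2 / f (u p) ^ 2 = 0 := le_antisymm hwle hw0
    have hnum : ‖gradient u p‖ ^ 2 = 0 := by
      rcases div_eq_zero_iff.mp hweq with h | h
      · exact h
      · exact absurd h (pow_pos (hF p) 2).ne'
    have : ‖gradient u p‖ = 0 := by
      exact pow_eq_zero_iff (by norm_num) |>.mp hnum
    exact norm_eq_zero.mp this
  -- conclude that u is constant
  have hfderiv0 : ∀ p : E2, fderiv ℝ u p = 0 := by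
    intro p
    have h2 : (InnerProductSpace.toDual ℝ E2).symm (fderiv ℝ u p) = 0 := hgrad0 p
    simpa using (InnerProductSpace.toDual ℝ E2).symm.map_eq_zero_iff.mp h2
  exact ⟨u 0, fun p => is_const_of_fderiv_eq_zero (hu.differentiable (by simp)) hfderiv0 p 0⟩
end

section
/- Let $I \subseteq \mathbb{R}$ be an open interval and $f : I \to (0,\infty)$ a smooth function with $(\log f)''(t) \le 0$ for all $t \in I$, and suppose $\alpha := \inf_{t \in I} \dfrac{f'(t)^2}{f(t)^2} > 0$. Then there is no smooth doubly periodic function $u : \mathbb{R}^2 \to \mathbb{R}$ with $u(\mathbb{R}^2) \subseteq I$, $|Du| < f(u)$ everywhere, and $H(u)^2 < \alpha$ at every point of $\mathbb{R}^2$. -/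
/- ### Auxiliary lemmas -/

lemma second_deriv_nonpos_at_max (φ : ℝ → ℝ) (hφ : ContDiff ℝ (⊤ : ℕ∞) φ)
    (hmax : ∀ t, φ t ≤ φ 0) : deriv (deriv φ) 0 ≤ 0 := by
  by_contra h
  push_neg at h
  have hφ' : ContDiff ℝ ((⊤:ℕ∞):WithTop ℕ∞) φ := hφ.of_le (by simp)
  have h1 : Differentiable ℝ φ ∧ ContDiff ℝ ((⊤:ℕ∞):WithTop ℕ∞) (deriv φ) :=
    contDiff_infty_iff_deriv.mp hφ'
  have h2 : Differentiable ℝ (deriv φ) ∧ ContDiff ℝ ((⊤:ℕ∞):WithTop ℕ∞) (deriv (deriv φ)) :=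
    contDiff_infty_iff_deriv.mp h1.2
  have hψ0 : deriv φ 0 = 0 :=
    IsLocalMax.deriv_eq_zero (Filter.Eventually.of_forall hmax)
  have hcont : ContinuousAt (deriv (deriv φ)) 0 := h2.2.continuous.continuousAt
  have hev : ∀ᶠ t in nhds (0:ℝ), 0 < deriv (deriv φ) t := hcont.eventually (eventually_gt_nhds h)
  obtain ⟨ε, hε, hb⟩ := Metric.eventually_nhds_iff.mp hev
  have hmono1 : StrictMonoOn (deriv φ) (Set.Icc 0 (ε/2)) := by
    apply strictMonoOn_of_deriv_pos (convex_Icc _ _) (h2.1.continuous.continuousOn)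
    intro t ht
    rw [interior_Icc] at ht
    apply hb
    rw [Real.dist_eq, sub_zero, abs_of_pos ht.1]
    linarith [ht.2]
  have hmono2 : StrictMonoOn φ (Set.Icc 0 (ε/2)) := by
    apply strictMonoOn_of_deriv_pos (convex_Icc _ _) (h1.1.continuous.continuousOn)
    intro t ht
    rw [interior_Icc] at ht
    have := hmono1 (Set.left_mem_Icc.mpr (by linarith)) ⟨ht.1.le, ht.2.le⟩ ht.1
    rwa [hψ0] at this
  have : φ 0 < φ (ε/2) :=
    hmono2 (Set.left_mem_Icc.mpr (by linarith)) (Set.right_mem_Icc.mpr (by linarith)) (by linarith)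
  exact absurd (hmax (ε/2)) (not_le.mpr this)

lemma second_deriv_nonneg_at_min (φ : ℝ → ℝ) (hφ : ContDiff ℝ (⊤ : ℕ∞) φ)
    (hmin : ∀ t, φ 0 ≤ φ t) : 0 ≤ deriv (deriv φ) 0 := by
  have := second_deriv_nonpos_at_max (fun t => -φ t) hφ.neg (fun t => neg_le_neg (hmin t))
  have hd : deriv (fun t => -φ t) = fun t => -(deriv φ t) := funext fun t => deriv.neg
  rw [hd] at this
  have hd2 : deriv (fun t => -(deriv φ t)) 0 = -(deriv (deriv φ) 0) := deriv.neg
  rw [hd2] at this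
  linarith

lemma grad_smooth (u : E2 → ℝ) (hu : ContDiff ℝ (⊤ : ℕ∞) u) :
    ContDiff ℝ ((⊤:ℕ∞):WithTop ℕ∞) (gradient u) := by
  have h1 : ContDiff ℝ ((⊤:ℕ∞):WithTop ℕ∞) (fderiv ℝ u) := hu.fderiv_right (by simp)
  exact ((InnerProductSpace.toDual ℝ E2).symm.contDiff (n := ((⊤:ℕ∞):WithTop ℕ∞))).comp h1

lemma fderiv_u_apply (u : E2 → ℝ) (q : E2) (i : Fin 2) :
    fderiv ℝ u q (EuclideanSpace.single i (1:ℝ)) = gradient u q i := by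
  have h1 : InnerProductSpace.toDual ℝ E2 (gradient u q) = fderiv ℝ u q := by
    simp [gradient]
  have h2 : fderiv ℝ u q (EuclideanSpace.single i (1:ℝ))
      = inner ℝ (gradient u q) (EuclideanSpace.single i (1:ℝ)) := by
    rw [← h1]; rfl
  rw [h2, EuclideanSpace.inner_single_right]
  simp

lemma curve_hasDerivAt (p0 : E2) (e : E2) (t : ℝ) :
    HasDerivAt (fun s : ℝ => p0 + s • e) e t := by
  simpa using ((hasDerivAt_id t).smul_const e).const_add p0

lemma diag_entry (u : E2 → ℝ) (hu : ContDiff ℝ (⊤ : ℕ∞) u) (p0 : E2) (i : Fin 2) :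
    deriv (deriv (fun t : ℝ => u (p0 + t • EuclideanSpace.single i (1:ℝ)))) 0
      = fderiv ℝ (gradient u) p0 (EuclideanSpace.single i (1:ℝ)) i := by
  set e := EuclideanSpace.single i (1:ℝ) with he
  have hud : Differentiable ℝ u := hu.differentiable (by simp)
  have hgd : Differentiable ℝ (gradient u) :=
    (grad_smooth u hu).differentiable (by simp)
  have hstep1 : deriv (fun t : ℝ => u (p0 + t • e)) = fun t => gradient u (p0 + t • e) i := by
    funext t
    have : HasDerivAt (fun s : ℝ => u (p0 + s • e)) (fderiv ℝ u (p0 + t • e) e) t :=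
      (hud (p0 + t • e)).hasFDerivAt.comp_hasDerivAt t (curve_hasDerivAt p0 e t)
    rw [this.deriv, fderiv_u_apply u]
  rw [hstep1]
  have h2 : HasDerivAt (fun t : ℝ => gradient u (p0 + t • e)) (fderiv ℝ (gradient u) p0 e) 0 := by
    have h0 : p0 + (0:ℝ) • e = p0 := by simp
    have := (hgd (p0 + (0:ℝ) • e)).hasFDerivAt.comp_hasDerivAt 0 (curve_hasDerivAt p0 e 0)
    rwa [h0] at this
  have h3 : HasDerivAt (fun t : ℝ => gradient u (p0 + t • e) i)
      (fderiv ℝ (gradient u) p0 e i) 0 := by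
    have := (EuclideanSpace.proj (𝕜 := ℝ) i).hasFDerivAt.comp_hasDerivAt 0 h2
    exact this
  exact h3.deriv

lemma trace_eq_sum (T : E2 →L[ℝ] E2) :
    LinearMap.trace ℝ E2 T.toLinearMap
      = ∑ i : Fin 2, T (EuclideanSpace.single i (1:ℝ)) i := by
  rw [LinearMap.trace_eq_matrix_trace ℝ (PiLp.basisFun 2 ℝ (Fin 2)) T.toLinearMap]
  rw [Matrix.trace]
  apply Finset.sum_congr rfl
  intro i _
  rw [Matrix.diag_apply, LinearMap.toMatrix_apply, PiLp.basisFun_repr, PiLp.basisFun_apply]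
  rfl

lemma Hmean_at_crit (f : ℝ → ℝ) (u : E2 → ℝ) (hu : ContDiff ℝ (⊤ : ℕ∞) u) (p0 : E2)
    (hfud : DifferentiableAt ℝ (fun q => f (u q)) p0)
    (hf0 : 0 < f (u p0)) (hcrit : gradient u p0 = 0) :
    Hmean f u p0 = -((2 * (f (u p0))^2)⁻¹ *
        LinearMap.trace ℝ E2 (fderiv ℝ (gradient u) p0).toLinearMap)
      - deriv f (u p0) / f (u p0) := by
  have hgd : Differentiable ℝ (gradient u) :=
    (grad_smooth u hu).differentiable (by simp)
  have hns : DifferentiableAt ℝ (fun q => ‖gradient u q‖^2) p0 :=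
    ((grad_smooth u hu).norm_sq ℝ).differentiable (by simp) p0
  have harg : DifferentiableAt ℝ (fun q => (f (u q))^2 - ‖gradient u q‖^2) p0 :=
    (hfud.pow 2).sub hns
  have hargne : (f (u p0))^2 - ‖gradient u p0‖^2 ≠ 0 := by
    rw [hcrit]; simp; positivity
  have hsqrt : DifferentiableAt ℝ
      (fun q => Real.sqrt ((f (u q))^2 - ‖gradient u q‖^2)) p0 := harg.sqrt hargne
  have hsqrtval : Real.sqrt ((f (u p0))^2 - ‖gradient u p0‖^2) = f (u p0) := by
    rw [hcrit]; simp [Real.sqrt_sq hf0.le]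
  have hc : DifferentiableAt ℝ
      (fun q => (2 * f (u q) * Real.sqrt ((f (u q))^2 - ‖gradient u q‖^2))⁻¹) p0 := by
    apply DifferentiableAt.inv (((hfud.const_mul 2)).mul hsqrt)
    show 2 * f (u p0) * Real.sqrt ((f (u p0))^2 - ‖gradient u p0‖^2) ≠ 0
    rw [hsqrtval]; positivity
  have hV : fderiv ℝ
        (fun q => (2 * f (u q) * Real.sqrt ((f (u q))^2 - ‖gradient u q‖^2))⁻¹ • gradient u q) p0
      = (2 * f (u p0) * Real.sqrt ((f (u p0))^2 - ‖gradient u p0‖^2))⁻¹ •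
          fderiv ℝ (gradient u) p0 := by
    rw [fderiv_fun_smul hc (hgd p0), hcrit]
    have : (fderiv ℝ (fun q =>
        (2 * f (u q) * Real.sqrt ((f (u q))^2 - ‖gradient u q‖^2))⁻¹) p0).smulRight (0:E2) = 0 := by
      ext v; simp
    rw [this, add_zero]
  have hcval : (2 * f (u p0) * Real.sqrt ((f (u p0))^2 - ‖gradient u p0‖^2))⁻¹
      = (2 * (f (u p0))^2)⁻¹ := by
    rw [hsqrtval]; ring_nf
  unfold Hmean divergence
  rw [hV, hcval, hsqrtval]
  rw [ContinuousLinearMap.coe_smul, LinearMap.map_smul, smul_eq_mul]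
  rw [hcrit]
  have hfne : f (u p0) ≠ 0 := hf0.ne'
  simp only [norm_zero]
  ring_nf

/-- Theorem 4.2 (nonexistence part) on the flat torus: if `(log f)'' ≤ 0` on `I`
and `α := inf_I f'²/f² > 0`, there is no smooth doubly periodic `u` with `|Du| < f(u)` and
`H(u)² < α` everywhere. -/
theorem stmt6 (I : Set ℝ) (hI : IsOpen I) (hIc : I.OrdConnected)
    (f : ℝ → ℝ) (hf : ContDiffOn ℝ (⊤ : ℕ∞) f I) (hfpos : ∀ t ∈ I, 0 < f t)
    (hlog : ∀ t ∈ I, deriv (deriv (fun s => Real.log (f s))) t ≤ 0)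
    (α : ℝ) (hαdef : α = sInf ((fun t => (deriv f t) ^ 2 / (f t) ^ 2) '' I))
    (hαpos : 0 < α) :
    ¬ ∃ u : E2 → ℝ, ContDiff ℝ (⊤ : ℕ∞) u ∧ (∀ p, u p ∈ I) ∧ DoublyPeriodic u ∧
      (∀ p, ‖gradient u p‖ < f (u p)) ∧
      (∀ p, (Hmean f u p) ^ 2 < α) := by
  rintro ⟨u, hu, hmem, hper, hgrad, hH⟩
  -- the infimum bound
  have hαle : ∀ t ∈ I, α * (f t)^2 ≤ (deriv f t)^2 := by
    intro t ht
    have h1 : α ≤ (deriv f t)^2/(f t)^2 := by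
      rw [hαdef]
      refine csInf_le ⟨0, ?_⟩ ⟨t, ht, rfl⟩
      rintro x ⟨s, _, rfl⟩; positivity
    exact (le_div_iff₀ (pow_pos (hfpos t ht) 2)).mp h1
  have hne : ∀ t ∈ I, deriv f t ≠ 0 := by
    intro t ht h0
    have := hαle t ht
    rw [h0] at this
    nlinarith [pow_pos (hfpos t ht) 2]
  -- f' has constant sign on I
  have hsign : (∀ t ∈ I, deriv f t < 0) ∨ (∀ t ∈ I, 0 < deriv f t) := by
    by_contra hcon
    push_neg at hcon
    obtain ⟨⟨a, ha, ha'⟩, ⟨b, hb, hb'⟩⟩ := hcon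
    have hfc : ContinuousOn (deriv f) I :=
      (hf.deriv_of_isOpen (m := ((⊤:ℕ∞):WithTop ℕ∞)) hI (by simp)).continuousOn
    have hsub : Set.uIcc b a ⊆ I := hIc.uIcc_subset hb ha
    have h0mem : (0:ℝ) ∈ Set.uIcc (deriv f b) (deriv f a) := by
      apply Set.mem_uIcc.mpr
      left
      exact ⟨hb', ((hne a ha).lt_of_le' ha').le⟩
    obtain ⟨c, hc, hc0⟩ := intermediate_value_uIcc (hfc.mono hsub) h0mem
    exact hne c (hsub hc) hc0
  -- global extrema from periodicity
  have hext : (∃ pM : E2, ∀ p, u p ≤ u pM) ∧ (∃ pm : E2, ∀ p, u pm ≤ u p) := by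
    set K : Set E2 :=
      (WithLp.equiv 2 (Fin 2 → ℝ)).symm '' Set.univ.pi (fun _ : Fin 2 => Set.Icc (0:ℝ) 1) with hK
    have hKc : IsCompact K :=
      (isCompact_univ_pi fun _ => isCompact_Icc).image (PiLp.continuous_toLp _ _)
    have hKne : K.Nonempty := ⟨(WithLp.equiv 2 (Fin 2 → ℝ)).symm (fun _ => 0),
      Set.mem_image_of_mem _ (by intro i _; exact ⟨le_refl 0, zero_le_one⟩)⟩
    have hrepr : ∀ p : E2, ∃ q ∈ K, u p = u q := by
      intro p
      refine ⟨(WithLp.equiv 2 (Fin 2 → ℝ)).symm (fun i => Int.fract (p i)), ?_, ?_⟩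
      · exact Set.mem_image_of_mem _ (fun i _ => ⟨Int.fract_nonneg _, (Int.fract_lt_one _).le⟩)
      · rw [← hper ((WithLp.equiv 2 (Fin 2 → ℝ)).symm (fun i => Int.fract (p i)))
          (fun i => ⌊p i⌋)]
        congr 1
        apply PiLp.ext
        intro i
        rw [PiLp.add_apply, WithLp.equiv_symm_apply, PiLp.toLp_apply, PiLp.toLp_apply,
          Int.fract_add_floor]
    constructor
    · obtain ⟨pM, _, hmax⟩ := hKc.exists_isMaxOn hKne hu.continuous.continuousOn
      refine ⟨pM, fun p => ?_⟩
      obtain ⟨q, hq, hq'⟩ := hrepr p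
      rw [hq']; exact hmax hq
    · obtain ⟨pm, _, hmin⟩ := hKc.exists_isMinOn hKne hu.continuous.continuousOn
      refine ⟨pm, fun p => ?_⟩
      obtain ⟨q, hq, hq'⟩ := hrepr p
      rw [hq']; exact hmin hq
  -- common facts
  have hfI : ∀ t ∈ I, DifferentiableAt ℝ f t := fun t ht =>
    (hf.differentiableOn (by simp)).differentiableAt (hI.mem_nhds ht)
  have hud : Differentiable ℝ u := hu.differentiable (by simp)
  have hcurve : ∀ (p0 : E2) (i : Fin 2),
      ContDiff ℝ (⊤ : ℕ∞) (fun t : ℝ => u (p0 + t • EuclideanSpace.single i (1:ℝ))) := by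
    intro p0 i
    exact hu.comp (contDiff_const.add (contDiff_id.smul contDiff_const))
  have hsqrtα : ∀ t ∈ I, Real.sqrt α * f t ≤ |deriv f t| := by
    intro t ht
    have h1 := Real.sqrt_le_sqrt (hαle t ht)
    rwa [Real.sqrt_mul hαpos.le, Real.sqrt_sq (hfpos t ht).le, Real.sqrt_sq_eq_abs] at h1
  rcases hsign with hneg | hpos
  · -- f' < 0 on I : use a global maximum
    obtain ⟨p0, hglob⟩ := hext.1
    have hf0 : 0 < f (u p0) := hfpos _ (hmem p0)
    have hcrit : gradient u p0 = 0 := by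
      have hloc : IsLocalMax u p0 := Filter.Eventually.of_forall hglob
      simp [gradient, hloc.fderiv_eq_zero]
    have hfud : DifferentiableAt ℝ (fun q => f (u q)) p0 :=
      (hfI (u p0) (hmem p0)).comp p0 (hud p0)
    have htr : LinearMap.trace ℝ E2 (fderiv ℝ (gradient u) p0).toLinearMap ≤ 0 := by
      rw [trace_eq_sum]
      apply Finset.sum_nonpos
      intro i _
      rw [← diag_entry u hu p0 i]
      apply second_deriv_nonpos_at_max _ (hcurve p0 i)
      intro t
      simp only [zero_smul, add_zero]
      exact hglob _
    have hHval := Hmean_at_crit f u hu p0 hfud hf0 hcrit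
    have hd0 : deriv f (u p0) < 0 := hneg _ (hmem p0)
    have h1 : Real.sqrt α ≤ - deriv f (u p0) / f (u p0) := by
      have := hsqrtα (u p0) (hmem p0)
      rw [abs_of_neg hd0] at this
      rw [le_div_iff₀ hf0]
      linarith
    have h2 : - deriv f (u p0) / f (u p0) ≤ Hmean f u p0 := by
      rw [hHval]
      have hle : (2 * (f (u p0))^2)⁻¹ *
          LinearMap.trace ℝ E2 (fderiv ℝ (gradient u) p0).toLinearMap ≤ 0 :=
        mul_nonpos_of_nonneg_of_nonpos (by positivity) htr
      have : - deriv f (u p0) / f (u p0) = -(deriv f (u p0) / f (u p0)) := by ring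
      linarith [neg_nonneg.mpr hle]
    have h3 : Real.sqrt α ≤ Hmean f u p0 := h1.trans h2
    have h4 : α ≤ (Hmean f u p0)^2 := by
      calc α = (Real.sqrt α)^2 := (Real.sq_sqrt hαpos.le).symm
      _ ≤ (Hmean f u p0)^2 := pow_le_pow_left₀ (Real.sqrt_nonneg _) h3 2
    exact absurd (hH p0) (not_lt.mpr h4)
  · -- f' > 0 on I : use a global minimum
    obtain ⟨p0, hglob⟩ := hext.2
    have hf0 : 0 < f (u p0) := hfpos _ (hmem p0)
    have hcrit : gradient u p0 = 0 := by
      have hloc : IsLocalMin u p0 := Filter.Eventually.of_forall hglob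
      simp [gradient, hloc.fderiv_eq_zero]
    have hfud : DifferentiableAt ℝ (fun q => f (u q)) p0 :=
      (hfI (u p0) (hmem p0)).comp p0 (hud p0)
    have htr : 0 ≤ LinearMap.trace ℝ E2 (fderiv ℝ (gradient u) p0).toLinearMap := by
      rw [trace_eq_sum]
      apply Finset.sum_nonneg
      intro i _
      rw [← diag_entry u hu p0 i]
      apply second_deriv_nonneg_at_min _ (hcurve p0 i)
      intro t
      simp only [zero_smul, add_zero]
      exact hglob _
    have hHval := Hmean_at_crit f u hu p0 hfud hf0 hcrit
    have hd0 : 0 < deriv f (u p0) := hpos _ (hmem p0)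
    have h1 : Real.sqrt α ≤ deriv f (u p0) / f (u p0) := by
      have := hsqrtα (u p0) (hmem p0)
      rw [abs_of_pos hd0] at this
      rw [le_div_iff₀ hf0]
      linarith
    have h2 : Hmean f u p0 ≤ - (deriv f (u p0) / f (u p0)) := by
      rw [hHval]
      have hle : 0 ≤ (2 * (f (u p0))^2)⁻¹ *
          LinearMap.trace ℝ E2 (fderiv ℝ (gradient u) p0).toLinearMap :=
        mul_nonneg (by positivity) htr
      linarith
    have h3 : Real.sqrt α ≤ - Hmean f u p0 := by linarith
    have h4 : α ≤ (Hmean f u p0)^2 := by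
      calc α = (Real.sqrt α)^2 := (Real.sq_sqrt hαpos.le).symm
      _ ≤ (- Hmean f u p0)^2 := pow_le_pow_left₀ (Real.sqrt_nonneg _) h3 2
      _ = (Hmean f u p0)^2 := neg_sq _
    exact absurd (hH p0) (not_lt.mpr h4)
end

section
/- Let $I \subseteq \mathbb{R}$ be an open interval, $f : I \to (0,\infty)$ a smooth function with $(\log f)''(t) \le 0$ for all $t \in I$, and $\epsilon > 0$ a real constant. Then there is no smooth doubly periodic function $u : \mathbb{R}^2 \to \mathbb{R}$ with $u(\mathbb{R}^2) \subseteq I$, $|Du| < f(u)$ everywhere, such that $\dfrac{f'(u)^2}{f(u)^2} - H(u)^2 > \epsilon$ at every point of $\mathbb{R}^2$. -/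
open Filter Topology
open scoped RealInnerProductSpace

noncomputable section AuxLemmas

/-- Second derivative test: at a local max with vanishing first derivative,
the second derivative is nonpositive. -/
lemma second_deriv_test_max {φ ψ : ℝ → ℝ} {c : ℝ}
    (hmax : IsLocalMax φ 0) (hφ : ∀ t, HasDerivAt φ (ψ t) t)
    (hψ : HasDerivAt ψ c 0) (hψ0 : ψ 0 = 0) : c ≤ 0 := by
  by_contra hc
  push_neg at hc
  have hslope : Tendsto (slope ψ 0) (𝓝[≠] 0) (𝓝 c) :=
    hasDerivAt_iff_tendsto_slope.mp hψ
  have h1 : ∀ᶠ t in 𝓝[≠] (0:ℝ), 0 < slope ψ 0 t :=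
    hslope.eventually (eventually_gt_nhds hc)
  have h2 : ∀ᶠ t in 𝓝[>] (0:ℝ), 0 < slope ψ 0 t :=
    h1.filter_mono (nhdsWithin_mono _ (fun x hx => ne_of_gt hx))
  have h3 : ∀ᶠ t in 𝓝[>] (0:ℝ), φ t ≤ φ 0 :=
    hmax.filter_mono nhdsWithin_le_nhds
  obtain ⟨δ, hδ, hIoo⟩ :=
    (nhdsGT_basis_of_exists_gt ⟨1, by norm_num⟩).eventually_iff.mp (h2.and h3)
  have hψpos : ∀ t ∈ Set.Ioo (0:ℝ) δ, 0 < ψ t := by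
    intro t ht
    have := (hIoo ⟨ht.1, ht.2⟩).1
    rw [slope_def_field, hψ0] at this
    have h4 : 0 < (ψ t - 0) / (t - 0) := this
    have : 0 < ψ t - 0 := by
      have := mul_pos h4 (by linarith [ht.1] : (0:ℝ) < t - 0)
      rwa [div_mul_cancel₀] at this
      linarith [ht.1]
    linarith
  have hmono : StrictMonoOn φ (Set.Icc 0 δ) := by
    apply strictMonoOn_of_deriv_pos (convex_Icc 0 δ)
    · exact fun t _ => ((hφ t).differentiableAt).continuousAt.continuousWithinAt
    · intro t ht
      rw [interior_Icc] at ht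
      rw [(hφ t).deriv]
      exact hψpos t ht
  have h5 : φ 0 < φ (δ/2) :=
    hmono (Set.left_mem_Icc.mpr hδ.le) ⟨by linarith, by linarith⟩ (by linarith)
  have h6 : φ (δ/2) ≤ φ 0 := (hIoo ⟨by linarith, by linarith⟩).2
  linarith

lemma second_deriv_test_min {φ ψ : ℝ → ℝ} {c : ℝ}
    (hmin : IsLocalMin φ 0) (hφ : ∀ t, HasDerivAt φ (ψ t) t)
    (hψ : HasDerivAt ψ c 0) (hψ0 : ψ 0 = 0) : 0 ≤ c := by
  have := second_deriv_test_max (φ := -φ) (ψ := -ψ) (c := -c) hmin.neg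
    (fun t => (hφ t).neg) hψ.neg (by simp [hψ0])
  linarith

lemma gradient_contDiff {u : E2 → ℝ} (hu : ContDiff ℝ (⊤ : ℕ∞) u) :
    ContDiff ℝ (⊤ : ℕ∞) (fun q => gradient u q) := by
  have h1 : ContDiff ℝ (⊤ : ℕ∞) (fun q => fderiv ℝ u q) := hu.fderiv_right (by simp)
  exact ((InnerProductSpace.toDual ℝ E2).symm.contDiff).comp h1

lemma gradient_component (u : E2 → ℝ) (q : E2) (i : Fin 2) :
    gradient u q i = fderiv ℝ u q (EuclideanSpace.single i 1) := by
  have h1 : gradient u q i = ⟪EuclideanSpace.single i 1, gradient u q⟫ := by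
    rw [EuclideanSpace.inner_single_left]; simp
  rw [h1, real_inner_comm]
  exact InnerProductSpace.toDual_symm_apply

/-- Trace of the derivative of the gradient equals the sum of pure second derivatives. -/
lemma trace_fderiv_gradient {u : E2 → ℝ} (hu : ContDiff ℝ (⊤ : ℕ∞) u) (p : E2) :
    LinearMap.trace ℝ E2 (fderiv ℝ (fun q => gradient u q) p).toLinearMap =
      ∑ i : Fin 2, fderiv ℝ (fun q => fderiv ℝ u q (EuclideanSpace.single i 1)) p
        (EuclideanSpace.single i 1) := by
  set G : E2 → E2 := fun q => gradient u q with hGdef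
  have hGd : DifferentiableAt ℝ G p :=
    ((gradient_contDiff hu).differentiable (by simp)).differentiableAt
  set D := fderiv ℝ G p with hD
  set b := (EuclideanSpace.basisFun (Fin 2) ℝ).toBasis with hb
  rw [LinearMap.trace_eq_matrix_trace ℝ b, Matrix.trace]
  congr 1
  funext i
  have hbi : b i = EuclideanSpace.single i 1 := by
    simp [hb, EuclideanSpace.basisFun_apply]
  have hdiag : Matrix.diag (LinearMap.toMatrix b b D.toLinearMap) i
      = (D (EuclideanSpace.single i 1)) i := by
    rw [Matrix.diag_apply, LinearMap.toMatrix_apply, hbi]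
    rfl
  rw [hdiag]
  set e := EuclideanSpace.single (𝕜 := ℝ) i (1:ℝ) with he
  have hcomp : HasFDerivAt (fun q => G q i) ((EuclideanSpace.proj (𝕜 := ℝ) i).comp D) p :=
    ((EuclideanSpace.proj (𝕜 := ℝ) i).hasFDerivAt.comp p hGd.hasFDerivAt : _)
  have heq : (fun q => G q i) = fun q => fderiv ℝ u q e := by
    funext q; exact gradient_component u q i
  rw [heq] at hcomp
  have := hcomp.fderiv
  calc (D e) i = ((EuclideanSpace.proj (𝕜 := ℝ) i).comp D) e := rfl
    _ = fderiv ℝ (fun q => fderiv ℝ u q e) p e := by rw [← this]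

/-- The value of the mean curvature operator at a critical point of `u`. -/
lemma hmean_critical (f : ℝ → ℝ) (u : E2 → ℝ) (hu : ContDiff ℝ (⊤ : ℕ∞) u) (p : E2)
    (hfd : DifferentiableAt ℝ f (u p)) (hc : 0 < f (u p)) (hg0 : gradient u p = 0) :
    Hmean f u p = -(2 * (f (u p))^2)⁻¹ *
      (∑ i : Fin 2, fderiv ℝ (fun q => fderiv ℝ u q (EuclideanSpace.single i 1)) p
        (EuclideanSpace.single i 1))
      - deriv f (u p) / f (u p) := by
  set c := f (u p) with hcdef
  set G : E2 → E2 := fun q => gradient u q with hGdef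
  have hGd : DifferentiableAt ℝ G p :=
    ((gradient_contDiff hu).differentiable (by simp)).differentiableAt
  have hud : DifferentiableAt ℝ u p := (hu.differentiable (by simp)).differentiableAt
  have hfu : DifferentiableAt ℝ (fun q => f (u q)) p := hfd.comp p hud
  have hnorm : DifferentiableAt ℝ (fun q => ‖G q‖^2) p := by
    have h : (fun q => ‖G q‖^2) = fun q => ⟪G q, G q⟫ := by
      funext q; exact (real_inner_self_eq_norm_sq _).symm
    rw [h]; exact DifferentiableAt.inner ℝ hGd hGd
  have hs : DifferentiableAt ℝ (fun q => (f (u q))^2 - ‖G q‖^2) p :=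
    (hfu.pow 2).sub hnorm
  have hG0 : ‖G p‖ = 0 := by rw [hGdef]; simp [hg0]
  have hsval : (f (u p))^2 - ‖G p‖^2 = c^2 := by rw [hG0]; ring
  have hsne : (f (u p))^2 - ‖G p‖^2 ≠ 0 := by rw [hsval]; positivity
  have hsq : DifferentiableAt ℝ (fun q => Real.sqrt ((f (u q))^2 - ‖G q‖^2)) p :=
    hs.sqrt hsne
  have hsqval : Real.sqrt ((f (u p))^2 - ‖G p‖^2) = c := by
    rw [hsval]; exact Real.sqrt_sq hc.le
  have hgd : DifferentiableAt ℝ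
      (fun q => (2 * f (u q) * Real.sqrt ((f (u q))^2 - ‖G q‖^2))⁻¹) p := by
    apply DifferentiableAt.inv (((differentiableAt_const 2).mul hfu).mul hsq)
    show 2 * f (u p) * Real.sqrt ((f (u p))^2 - ‖G p‖^2) ≠ 0
    rw [hsqval]; positivity
  have hV : fderiv ℝ
      (fun q => (2 * f (u q) * Real.sqrt ((f (u q))^2 - ‖gradient u q‖^2))⁻¹ • gradient u q) p
      = (2 * c * c)⁻¹ • fderiv ℝ G p := by
    rw [fderiv_fun_smul hgd hGd]
    have hGp0 : G p = 0 := hg0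
    rw [hGp0]
    have h2 : Real.sqrt (f (u p)^2 - ‖(0:E2)‖^2) = c := by
      rw [norm_zero, show f (u p)^2 - (0:ℝ)^2 = c^2 by rw [hcdef]; ring]
      exact Real.sqrt_sq hc.le
    rw [h2]
    ext v
    simp [hcdef]
  have hdiv : divergence
      (fun q => (2 * f (u q) * Real.sqrt ((f (u q))^2 - ‖gradient u q‖^2))⁻¹ • gradient u q) p
      = (2 * c * c)⁻¹ *
        (∑ i : Fin 2, fderiv ℝ (fun q => fderiv ℝ u q (EuclideanSpace.single i 1)) p
          (EuclideanSpace.single i 1)) := by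
    rw [divergence, hV, ← trace_fderiv_gradient hu p]
    rw [ContinuousLinearMap.coe_smul, map_smul]
    rfl
  rw [Hmean, hdiv]
  rw [show gradient u p = 0 from hg0]
  have h0 : ‖(0:E2)‖ = (0:ℝ) := norm_zero
  rw [h0]
  rw [show c^2 - (0:ℝ)^2 = c^2 by ring, Real.sqrt_sq hc.le]
  have hcne : c ≠ 0 := ne_of_gt hc
  field_simp
  ring

/-- At a global max, every pure second directional derivative is ≤ 0. -/
lemma second_dir_sign_max {u : E2 → ℝ} (hu : ContDiff ℝ (⊤ : ℕ∞) u) {p : E2}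
    (hmax : ∀ x, u x ≤ u p) (e : E2) :
    fderiv ℝ (fun q => fderiv ℝ u q e) p e ≤ 0 := by
  set L : ℝ → E2 := fun t => p + t • e with hLdef
  have hL : ∀ t, HasDerivAt L e t := by
    intro t
    have h1 : HasDerivAt (fun s : ℝ => s • e) ((1:ℝ) • e) t := (hasDerivAt_id t).smul_const e
    simpa [hLdef] using h1.const_add p
  have hL0 : L 0 = p := by simp [hLdef]
  set ψ : ℝ → ℝ := fun t => fderiv ℝ u (L t) e with hψdef
  have hφ : ∀ t, HasDerivAt (fun s => u (L s)) (ψ t) t := fun t =>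
    ((hu.differentiable (by simp) (L t)).hasFDerivAt).comp_hasDerivAt t (hL t)
  have hdd : DifferentiableAt ℝ (fun q => fderiv ℝ u q e) p := by
    have h1 : ContDiff ℝ (⊤ : ℕ∞) (fun q => fderiv ℝ u q e) :=
      (ContinuousLinearMap.apply ℝ ℝ e).contDiff.comp (hu.fderiv_right (by simp))
    exact (h1.differentiable (by simp)).differentiableAt
  have hψ : HasDerivAt ψ (fderiv ℝ (fun q => fderiv ℝ u q e) p e) 0 := by
    have hdd' : HasFDerivAt (fun q => fderiv ℝ u q e)
        (fderiv ℝ (fun q => fderiv ℝ u q e) p) (L 0) := by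
      rw [hL0]; exact hdd.hasFDerivAt
    exact hdd'.comp_hasDerivAt 0 (hL 0)
  have hψ0 : ψ 0 = 0 := by
    have hd0 : fderiv ℝ u p = 0 := by
      have : IsLocalMax u p := Filter.Eventually.of_forall hmax
      exact this.fderiv_eq_zero
    simp [hψdef, hL0, hd0]
  have hmax0 : IsLocalMax (fun s => u (L s)) 0 :=
    Filter.Eventually.of_forall (fun t => by simpa [hL0] using hmax (L t))
  exact second_deriv_test_max hmax0 hφ hψ hψ0

/-- At a global min, every pure second directional derivative is ≥ 0. -/
lemma second_dir_sign_min {u : E2 → ℝ} (hu : ContDiff ℝ (⊤ : ℕ∞) u) {p : E2}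
    (hmin : ∀ x, u p ≤ u x) (e : E2) :
    0 ≤ fderiv ℝ (fun q => fderiv ℝ u q e) p e := by
  set L : ℝ → E2 := fun t => p + t • e with hLdef
  have hL : ∀ t, HasDerivAt L e t := by
    intro t
    have h1 : HasDerivAt (fun s : ℝ => s • e) ((1:ℝ) • e) t := (hasDerivAt_id t).smul_const e
    simpa [hLdef] using h1.const_add p
  have hL0 : L 0 = p := by simp [hLdef]
  set ψ : ℝ → ℝ := fun t => fderiv ℝ u (L t) e with hψdef
  have hφ : ∀ t, HasDerivAt (fun s => u (L s)) (ψ t) t := fun t =>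
    ((hu.differentiable (by simp) (L t)).hasFDerivAt).comp_hasDerivAt t (hL t)
  have hdd : DifferentiableAt ℝ (fun q => fderiv ℝ u q e) p := by
    have h1 : ContDiff ℝ (⊤ : ℕ∞) (fun q => fderiv ℝ u q e) :=
      (ContinuousLinearMap.apply ℝ ℝ e).contDiff.comp (hu.fderiv_right (by simp))
    exact (h1.differentiable (by simp)).differentiableAt
  have hψ : HasDerivAt ψ (fderiv ℝ (fun q => fderiv ℝ u q e) p e) 0 := by
    have hdd' : HasFDerivAt (fun q => fderiv ℝ u q e)
        (fderiv ℝ (fun q => fderiv ℝ u q e) p) (L 0) := by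
      rw [hL0]; exact hdd.hasFDerivAt
    exact hdd'.comp_hasDerivAt 0 (hL 0)
  have hψ0 : ψ 0 = 0 := by
    have hd0 : fderiv ℝ u p = 0 := by
      have : IsLocalMin u p := Filter.Eventually.of_forall hmin
      exact this.fderiv_eq_zero
    simp [hψdef, hL0, hd0]
  have hmin0 : IsLocalMin (fun s => u (L s)) 0 :=
    Filter.Eventually.of_forall (fun t => by simpa [hL0] using hmin (L t))
  exact second_deriv_test_min hmin0 hφ hψ hψ0

/-- A continuous doubly periodic function attains a global max and a global min. -/
lemma doubly_periodic_extrema {u : E2 → ℝ} (hc : Continuous u) (hper : DoublyPeriodic u) :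
    (∃ p, ∀ x, u x ≤ u p) ∧ (∃ p, ∀ x, u p ≤ u x) := by
  have key : ∀ x : E2, ∃ y ∈ Metric.closedBall (0 : E2) 2, u y = u x := by
    intro x
    set k : Fin 2 → ℤ := fun i => ⌊x i⌋ with hk
    set v : E2 := (WithLp.equiv 2 (Fin 2 → ℝ)).symm (fun i => (k i : ℝ)) with hv
    refine ⟨x - v, ?_, ?_⟩
    · rw [Metric.mem_closedBall, dist_zero_right]
      have hcomp : ∀ i, ‖(x - v) i‖ ≤ 1 := by
        intro i
        have : (x - v) i = x i - (⌊x i⌋ : ℝ) := by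
          simp [hv, hk, WithLp.equiv_symm_apply]
        rw [this, Real.norm_eq_abs, abs_le]
        constructor <;> [linarith [Int.floor_le (x i), Int.lt_floor_add_one (x i)];
          linarith [Int.floor_le (x i), Int.lt_floor_add_one (x i)]]
      rw [EuclideanSpace.norm_eq (x - v)]
      have hsum : ∑ i, ‖(x - v) i‖ ^ 2 ≤ 2 := by
        calc ∑ i, ‖(x - v) i‖ ^ 2 ≤ ∑ _i : Fin 2, (1:ℝ) := by
              apply Finset.sum_le_sum; intro i _
              calc ‖(x - v) i‖ ^ 2 ≤ 1 ^ 2 :=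
                    pow_le_pow_left₀ (norm_nonneg _) (hcomp i) 2
                _ = 1 := one_pow 2
          _ = 2 := by simp
      calc Real.sqrt (∑ i, ‖(x - v) i‖ ^ 2) ≤ Real.sqrt 4 := by
            apply Real.sqrt_le_sqrt; linarith
        _ = 2 := by rw [show (4:ℝ) = 2^2 by norm_num, Real.sqrt_sq]; norm_num
    · have := hper (x - v) k
      rw [← hv] at this
      have h2 : u x = u (x - v) := by simpa using this
      exact h2.symm
  obtain ⟨pM, _, hpM⟩ := (isCompact_closedBall (0:E2) 2).exists_isMaxOn
    ⟨0, Metric.mem_closedBall_self (by norm_num)⟩ hc.continuousOn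
  obtain ⟨pm, _, hpm⟩ := (isCompact_closedBall (0:E2) 2).exists_isMinOn
    ⟨0, Metric.mem_closedBall_self (by norm_num)⟩ hc.continuousOn
  constructor
  · exact ⟨pM, fun x => by obtain ⟨y, hy, hyx⟩ := key x; rw [← hyx]; exact hpM hy⟩
  · exact ⟨pm, fun x => by obtain ⟨y, hy, hyx⟩ := key x; rw [← hyx]; exact hpm hy⟩

/-- If `(log f)'' ≤ 0` on `I` then `f'/f` is antitone on `I`. -/
lemma logderiv_antitone {I : Set ℝ} (hI : IsOpen I) (hIc : I.OrdConnected)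
    {f : ℝ → ℝ} (hf : ContDiffOn ℝ (⊤ : ℕ∞) f I) (hfpos : ∀ t ∈ I, 0 < f t)
    (hlog : ∀ t ∈ I, deriv (deriv (fun s => Real.log (f s))) t ≤ 0) :
    AntitoneOn (fun t => deriv f t / f t) I := by
  have hconv : Convex ℝ I := convex_iff_ordConnected.mpr hIc
  have hfd : ∀ t ∈ I, HasDerivAt f (deriv f t) t := fun t ht =>
    (((hf.differentiableOn (by simp)) t ht).differentiableAt (hI.mem_nhds ht)).hasDerivAt
  have hgI : Set.EqOn (deriv (fun s => Real.log (f s))) (fun t => deriv f t / f t) I :=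
    fun t ht => ((hfd t ht).log (ne_of_gt (hfpos t ht))).deriv
  have hderivCD : ContDiffOn ℝ (⊤ : ℕ∞) (deriv f) I := hf.deriv_of_isOpen hI (by simp)
  have hgdiff : DifferentiableOn ℝ (fun t => deriv f t / f t) I :=
    (hderivCD.differentiableOn (by simp)).div (hf.differentiableOn (by simp))
      (fun t ht => ne_of_gt (hfpos t ht))
  apply antitoneOn_of_deriv_nonpos hconv hgdiff.continuousOn
  · rw [hI.interior_eq]; exact hgdiff
  · intro t ht
    rw [hI.interior_eq] at ht
    have heq : deriv (fun s => Real.log (f s)) =ᶠ[nhds t] (fun t => deriv f t / f t) :=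
      Filter.eventually_of_mem (hI.mem_nhds ht) hgI
    rw [← heq.deriv_eq]
    exact hlog t ht

end AuxLemmas

/-- Theorem 3.7 on the flat torus: if `(log f)'' ≤ 0` on `I` and `ε > 0`,
there is no smooth doubly periodic `u` with `|Du| < f(u)` and
`f'(u)²/f(u)² - H(u)² > ε` everywhere. -/
theorem stmt7 (I : Set ℝ) (hI : IsOpen I) (hIc : I.OrdConnected)
    (f : ℝ → ℝ) (hf : ContDiffOn ℝ (⊤ : ℕ∞) f I) (hfpos : ∀ t ∈ I, 0 < f t)
    (hlog : ∀ t ∈ I, deriv (deriv (fun s => Real.log (f s))) t ≤ 0)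
    (ε : ℝ) (hε : 0 < ε) :
    ¬ ∃ u : E2 → ℝ, ContDiff ℝ (⊤ : ℕ∞) u ∧ (∀ p, u p ∈ I) ∧ DoublyPeriodic u ∧
      (∀ p, ‖gradient u p‖ < f (u p)) ∧
      (∀ p, ε < (deriv f (u p)) ^ 2 / (f (u p)) ^ 2 - (Hmean f u p) ^ 2) := by
  rintro ⟨u, hu, huI, hper, hgrad, hineq⟩
  obtain ⟨⟨pM, hpM⟩, ⟨pm, hpm⟩⟩ := doubly_periodic_extrema hu.continuous hper
  have hfd : ∀ p : E2, DifferentiableAt ℝ f (u p) := fun p =>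
    (((hf.differentiableOn (by simp)) _ (huI p)).differentiableAt (hI.mem_nhds (huI p)))
  -- gradient vanishes at the extrema
  have hgM : gradient u pM = 0 := by
    have hmx : IsLocalMax u pM := Filter.Eventually.of_forall hpM
    have h : fderiv ℝ u pM = 0 := hmx.fderiv_eq_zero
    show (InnerProductSpace.toDual ℝ E2).symm (fderiv ℝ u pM) = 0
    rw [h]; simp
  have hgm : gradient u pm = 0 := by
    have hmn : IsLocalMin u pm := Filter.Eventually.of_forall hpm
    have h : fderiv ℝ u pm = 0 := hmn.fderiv_eq_zero
    show (InnerProductSpace.toDual ℝ E2).symm (fderiv ℝ u pm) = 0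
    rw [h]; simp
  -- mean curvature at the extrema
  have hcM : 0 < f (u pM) := hfpos _ (huI pM)
  have hcm : 0 < f (u pm) := hfpos _ (huI pm)
  have hHM := hmean_critical f u hu pM (hfd pM) hcM hgM
  have hHm := hmean_critical f u hu pm (hfd pm) hcm hgm
  set A := deriv f (u pM) / f (u pM) with hA
  set B := deriv f (u pm) / f (u pm) with hB
  set HM := Hmean f u pM with hHMdef
  set Hm := Hmean f u pm with hHmdef
  -- sign facts from the second derivative test
  have hTM : (∑ i : Fin 2, fderiv ℝ (fun q => fderiv ℝ u q (EuclideanSpace.single i 1)) pM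
      (EuclideanSpace.single i 1)) ≤ 0 :=
    Finset.sum_nonpos fun i _ => second_dir_sign_max hu hpM _
  have hTm : 0 ≤ (∑ i : Fin 2, fderiv ℝ (fun q => fderiv ℝ u q (EuclideanSpace.single i 1)) pm
      (EuclideanSpace.single i 1)) :=
    Finset.sum_nonneg fun i _ => second_dir_sign_min hu hpm _
  have hinvM : (0:ℝ) < (2 * (f (u pM))^2)⁻¹ := by positivity
  have hinvm : (0:ℝ) < (2 * (f (u pm))^2)⁻¹ := by positivity
  have hAHM : 0 ≤ A + HM := by
    rw [hHM]
    have := mul_nonneg hinvM.le (neg_nonneg.mpr hTM)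
    nlinarith
  have hBHm : B + Hm ≤ 0 := by
    rw [hHm]
    have := mul_nonneg hinvm.le hTm
    nlinarith
  -- the inequalities at the extrema
  have hineqM : ε < A^2 - HM^2 := by
    have := hineq pM
    rw [hA, div_pow]
    exact this
  have hineqm : ε < B^2 - Hm^2 := by
    have := hineq pm
    rw [hB, div_pow]
    exact this
  -- A > 0 and B < 0
  have hApos : 0 < A := by
    by_contra h
    push_neg at h
    have h1 : 0 ≤ HM - A := by linarith
    have h2 := mul_nonneg hAHM h1
    nlinarith
  have hBneg : B < 0 := by
    by_contra h
    push_neg at h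
    have h1 : 0 ≤ -Hm - B := by linarith
    have h2 := mul_nonneg (neg_nonneg.mpr hBHm) h1
    nlinarith
  -- antitonicity of f'/f gives a contradiction
  have hanti := logderiv_antitone hI hIc hf hfpos hlog
  have hle : u pm ≤ u pM := hpm pM
  have := hanti (huI pm) (huI pM) hle
  simp only at this
  rw [← hA, ← hB] at this
  linarith
end
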